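/- arXiv:2501.10737 — 3 statements merged into one kernel-verified Lean document; each statement's English description precedes it below -/
import Mathlib

section
/- Let α ∈ (1,2), d ≥ 1, and ω(ξ) := (Σ_{i=1}^d (2 − 2 cos ξ_i))^{α/2}. For v ∈ ℝ^d define Ω_v := {ξ ∈ [−π,π]^d, ξ ≠ 0 : ∇ω(ξ) = v}. Then: (i) sup_{v ∈ ℝ^d} #Ω_v < ∞, i.e. there is M ∈ ℕ such that Ω_v has at most M elements for every v; and (ii) there is R > 0 such that Ω_v = ∅ whenever |v| > R. -/
noncomputable section

open MeasureTheory Real ENNReal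

/-- Functions on the lattice `hℤ^d`, indexed by `n : Fin d → ℤ` (the physical point is `h • n`). -/
abbrev LatFn (d : ℕ) := (Fin d → ℤ) → ℂ

/-- The dot product `(h n) · ξ` of the lattice point `h n` with a frequency `ξ`. -/
def latticeDot {d : ℕ} (h : ℝ) (n : Fin d → ℤ) (ξ : Fin d → ℝ) : ℝ :=
  ∑ i, (h * (n i : ℝ)) * ξ i

/-- The frequency box `[-π/h, π/h]^d`. -/
def freqBox (d : ℕ) (h : ℝ) : Set (Fin d → ℝ) :=
  Set.univ.pi fun _ => Set.Icc (-(π / h)) (π / h)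

/-- Discrete Fourier transform `ℱ_h u (ξ) = h^d ∑_{x ∈ hℤ^d} u x e^{-i x·ξ}`. -/
def dft {d : ℕ} (h : ℝ) (u : LatFn d) (ξ : Fin d → ℝ) : ℂ :=
  (h : ℂ) ^ d * ∑' n : Fin d → ℤ, u n * Complex.exp (-(Complex.I * (latticeDot h n ξ : ℂ)))

/-- Fourier multiplier operator on the lattice: `ℱ_h⁻¹ (m ⬝ ℱ_h u)`. -/
def dmul {d : ℕ} (h : ℝ) (m : (Fin d → ℝ) → ℂ) (u : LatFn d) : LatFn d :=
  fun n => (1 / (2 * π) ^ d : ℂ) *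
    ∫ ξ in freqBox d h, m ξ * dft h u ξ * Complex.exp (Complex.I * (latticeDot h n ξ : ℂ))

/-- The symbol `(∑_i (4/h²) sin²(h ξ_i/2))^{α/2}` of the discrete fractional Laplacian. -/
def discSymb {d : ℕ} (h α : ℝ) (ξ : Fin d → ℝ) : ℝ :=
  (∑ i, (4 / h ^ 2) * Real.sin (h * ξ i / 2) ^ 2) ^ (α / 2)

/-- The discrete fractional Laplacian `(-Δ_h)^{α/2}`. -/
def discFracLap {d : ℕ} (h α : ℝ) (u : LatFn d) : LatFn d :=
  dmul h (fun ξ => (discSymb h α ξ : ℂ)) u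

/-- The discrete propagator `U_h(t) = e^{-it(-Δ_h)^{α/2}}`. -/
def Uh {d : ℕ} (h α t : ℝ) (u : LatFn d) : LatFn d :=
  dmul h (fun ξ => Complex.exp (-(Complex.I * ((t * discSymb h α ξ : ℝ) : ℂ)))) u

/-- The discrete Bessel operator `⟨∇_h⟩^s = ℱ_h⁻¹ ⟨ξ⟩^s ℱ_h`. -/
def Js {d : ℕ} (h s : ℝ) (u : LatFn d) : LatFn d :=
  dmul h (fun ξ => (((1 + ∑ i, ξ i ^ 2) ^ (s / 2) : ℝ) : ℂ)) u

/-- The discrete Riesz operator `|∇_h|^s = ℱ_h⁻¹ |ξ|^s ℱ_h`. -/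
def gradS {d : ℕ} (h s : ℝ) (u : LatFn d) : LatFn d :=
  dmul h (fun ξ => (((∑ i, ξ i ^ 2) ^ (s / 2) : ℝ) : ℂ)) u

/-- The `L_h^p` norm `h^{d/p} (∑ |u x|^p)^{1/p}`, valued in `ℝ≥0∞`. -/
def LhNorm {d : ℕ} (h p : ℝ) (u : LatFn d) : ℝ≥0∞ :=
  ENNReal.ofReal (h ^ ((d : ℝ) / p)) * (∑' n, (‖u n‖₊ : ℝ≥0∞) ^ p) ^ (1 / p)

/-- The `L_h^∞` norm `sup_x |u x|`, valued in `ℝ≥0∞`. -/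
def LhInfNorm {d : ℕ} (u : LatFn d) : ℝ≥0∞ := ⨆ n, (‖u n‖₊ : ℝ≥0∞)

/-- The discrete Sobolev norm `‖u‖_{H_h^s} = ‖⟨∇_h⟩^s u‖_{L_h²}`. -/
def HhNorm {d : ℕ} (h s : ℝ) (u : LatFn d) : ℝ≥0∞ := LhNorm h 2 (Js h s u)

/-- Euclidean space `ℝ^d`. -/
abbrev Rd (d : ℕ) := EuclideanSpace ℝ (Fin d)

/-- Fourier transform on `ℝ^d` (convention `∫ f(x) e^{-i x·ξ} dx`). -/
def FT {d : ℕ} (f : Rd d → ℂ) (ξ : Rd d) : ℂ :=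
  ∫ x : Rd d, f x * Complex.exp (-(Complex.I * ((inner ℝ x ξ : ℝ) : ℂ)))

/-- The continuous propagator `U(t) = e^{-it(-Δ)^{α/2}}`, given by the Fourier
multiplier `e^{-it|ξ|^α}`. -/
def Uc {d : ℕ} (α t : ℝ) (f : Rd d → ℂ) (x : Rd d) : ℂ :=
  (1 / (2 * π) ^ d : ℂ) *
    ∫ ξ : Rd d, Complex.exp (Complex.I * (((inner ℝ x ξ : ℝ) - t * ‖ξ‖ ^ α : ℝ) : ℂ)) * FT f ξ

/-- The Sobolev `H^s(ℝ^d)` norm `‖⟨ξ⟩^s ℱf‖_{L²}`, valued in `ℝ≥0∞`. -/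
def HsNorm {d : ℕ} (s : ℝ) (f : Rd d → ℂ) : ℝ≥0∞ :=
  eLpNorm (fun ξ : Rd d => (((1 + ‖ξ‖ ^ 2) ^ (s / 2) : ℝ) : ℂ) * FT f ξ) 2 volume

/-- The cell `h n + [0,h)^d` of the lattice point `h n`. -/
def cell (d : ℕ) (h : ℝ) (n : Fin d → ℤ) : Set (Rd d) :=
  {y | ∀ i, y i ∈ Set.Ico (h * (n i : ℝ)) (h * (n i : ℝ) + h)}

/-- The discretization operator `d_h f (x) = h^{-d} ∫_{x+[0,h)^d} f`. -/
def dh {d : ℕ} (h : ℝ) (f : Rd d → ℂ) : LatFn d :=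
  fun n => (1 / (h : ℂ) ^ d) * ∫ y in cell d h n, f y

/-- The linear interpolation operator `p_h`. -/
def ph {d : ℕ} (h : ℝ) (u : LatFn d) (y : Rd d) : ℂ :=
  u (fun i => ⌊y i / h⌋) +
    ∑ i, ((u (fun j => ⌊y j / h⌋ + if j = i then 1 else 0) - u (fun i => ⌊y i / h⌋)) / (h : ℂ)) *
      (((y i - h * (⌊y i / h⌋ : ℝ)) : ℝ) : ℂ)

/-- The nonlinearity `|u|^{p-1} u` on the lattice. -/
def NLd {d : ℕ} (p : ℝ) (u : LatFn d) : LatFn d :=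
  fun n => ((‖u n‖ ^ (p - 1) : ℝ) : ℂ) * u n

/-- The nonlinearity `|f|^{p-1} f` on `ℝ^d`. -/
def NLc {d : ℕ} (p : ℝ) (f : Rd d → ℂ) : Rd d → ℂ :=
  fun x => ((‖f x‖ ^ (p - 1) : ℝ) : ℂ) * f x

/-- `u ∈ C([0,T]; H^s(ℝ^d))`. -/
def ContHsOn {d : ℕ} (s T : ℝ) (u : ℝ → Rd d → ℂ) : Prop :=
  ∀ t₀ ∈ Set.Icc (0 : ℝ) T, ∀ ε : ℝ, 0 < ε → ∃ δ > (0:ℝ), ∀ t ∈ Set.Icc (0 : ℝ) T,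
    |t - t₀| < δ → HsNorm s (fun x => u t x - u t₀ x) < ENNReal.ofReal ε

/-- `u ∈ C([0,T]; L_h²)`. -/
def ContL2hOn {d : ℕ} (h T : ℝ) (u : ℝ → LatFn d) : Prop :=
  ∀ t₀ ∈ Set.Icc (0 : ℝ) T, ∀ ε : ℝ, 0 < ε → ∃ δ > (0:ℝ), ∀ t ∈ Set.Icc (0 : ℝ) T,
    |t - t₀| < δ → LhNorm h 2 (fun n => u t n - u t₀ n) < ENNReal.ofReal ε

/-- `ω(ξ) = (∑_i (2 - 2 cos ξ_i))^{α/2}`. -/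
def omegaFn (α : ℝ) {d : ℕ} (ξ : Fin d → ℝ) : ℝ :=
  (∑ i, (2 - 2 * Real.cos (ξ i))) ^ (α / 2)

/-- The gradient `∇ω(ξ) = (α/ω(ξ)^{(2-α)/α}) (sin ξ_1, …, sin ξ_d)`. -/
def gradOmega (α : ℝ) {d : ℕ} (ξ : Fin d → ℝ) : Fin d → ℝ :=
  fun i => α * Real.sin (ξ i) / (∑ j, (2 - 2 * Real.cos (ξ j))) ^ ((2 - α) / 2)

/-- The Hessian matrix of `ω` at `ξ`, via the second derivative. -/
def hessOmega (α : ℝ) {d : ℕ} (ξ : Fin d → ℝ) : Matrix (Fin d) (Fin d) ℝ :=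
  Matrix.of fun i j =>
    iteratedFDeriv ℝ 2 (omegaFn α (d := d)) ξ ![Pi.single i 1, Pi.single j 1]

/-- The phase `Φ_v(ξ) = v·ξ - ω(ξ)`. -/
def phaseFn (α : ℝ) {d : ℕ} (v ξ : Fin d → ℝ) : ℝ :=
  (∑ i, v i * ξ i) - omegaFn α ξ

/-- The canonical embedding `ℝ^n → ℂ^n`. -/
def cplx {n : ℕ} (x : Fin n → ℝ) : EuclideanSpace ℂ (Fin n) := WithLp.toLp 2 (fun i => (x i : ℂ))

/-- The `C^M(Ω)` norm of `ζ`. -/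
def CMnorm {n : ℕ} (M : ℕ) (Ω : Set (Fin n → ℝ)) (ζ : (Fin n → ℝ) → ℂ) : ℝ :=
  sSup {a : ℝ | ∃ k, k ≤ M ∧ ∃ x ∈ Ω, a = ‖iteratedFDeriv ℝ k ζ x‖}

/-- The uniform oscillatory integral estimate `M(S, ξ₀) ≼ (β, 0)`. -/
def MLe {n : ℕ} (S : (Fin n → ℝ) → ℝ) (ξ₀ : Fin n → ℝ) (β : ℝ) : Prop :=
  ∃ r₀ > (0:ℝ), ∀ r : ℝ, 0 < r → r < r₀ →
    ∃ s > (0:ℝ), ∃ C > (0:ℝ), ∃ M : ℕ, ∃ Ω : Set (Fin n → ℝ),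
      IsOpen Ω ∧ ξ₀ ∈ Ω ∧ Ω ⊆ Metric.ball ξ₀ r ∧
      ∀ P : EuclideanSpace ℂ (Fin n) → ℂ,
        DifferentiableOn ℂ P (Metric.ball (cplx ξ₀) r) →
        ContinuousOn P (Metric.closedBall (cplx ξ₀) r) →
        (∀ x : Fin n → ℝ, cplx x ∈ Metric.closedBall (cplx ξ₀) r → (P (cplx x)).im = 0) →
        (∀ w ∈ Metric.closedBall (cplx ξ₀) r, ‖P w‖ < s) →
        ∀ ζ : (Fin n → ℝ) → ℂ, ContDiff ℝ (⊤ : ℕ∞) ζ → HasCompactSupport ζ → tsupport ζ ⊆ Ω →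
          ∀ τ : ℝ,
            ‖∫ ξ : Fin n → ℝ,
                Complex.exp (Complex.I * (τ : ℂ) * ((S ξ + (P (cplx ξ)).re : ℝ) : ℂ)) * ζ ξ‖
              ≤ C * (1 + |τ|) ^ β * CMnorm M Ω ζ

/-- The mixed norm `‖F‖_{L_t^q(ℝ)}` of a function of `t` valued in `ℝ≥0∞`. -/
def mixedLq (q : ℝ≥0∞) (F : ℝ → ℝ≥0∞) : ℝ≥0∞ :=
  if q = ∞ then essSup F volume else (∫⁻ t, F t ^ q.toReal) ^ (1 / q.toReal)

/-- The Hilbert space `L_h² = ℓ²(hℤ^d)`. -/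
abbrev L2h (d : ℕ) := lp (fun _ : (Fin d → ℤ) => ℂ) 2

/-- The set of critical points `Ω_v = {ξ ∈ 𝕋^d ∖ {0} : ∇ω(ξ) = v}`. -/
def critSet (α : ℝ) (d : ℕ) (v : Fin d → ℝ) : Set (Fin d → ℝ) :=
  {ξ | (∀ i, ξ i ∈ Set.Icc (-π) π) ∧ ξ ≠ 0 ∧ gradOmega α ξ = v}

open Set Finset
open Set Finset

lemma rolle_count (f f' : ℝ → ℝ) (hd : ∀ x : ℝ, 0 < x → HasDerivAt f (f' x) x)
    (hZ' : {x : ℝ | 0 < x ∧ f' x = 0}.Finite) :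
    {x : ℝ | 0 < x ∧ f x = 0}.Finite ∧
      {x : ℝ | 0 < x ∧ f x = 0}.ncard ≤ {x : ℝ | 0 < x ∧ f' x = 0}.ncard + 1 := by
  classical
  set Z' := {x : ℝ | 0 < x ∧ f' x = 0} with hZ'def
  set Z := {x : ℝ | 0 < x ∧ f x = 0} with hZdef
  have key : ∀ t : Finset ℝ, ↑t ⊆ Z → t.card ≤ Z'.ncard + 1 := by
    intro t ht
    set n := t.card with hn
    rcases Nat.eq_zero_or_pos n with h0 | hpos
    · omega
    -- sorted enumeration
    let e : Fin n ≃o {x // x ∈ t} := t.orderIsoOfFin rfl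
    let x : Fin n → ℝ := fun i => (e i : ℝ)
    have hxmono : StrictMono x := by
      intro i j hij
      exact_mod_cast (e.strictMono hij)
    have hxZ : ∀ i, x i ∈ Z := fun i => ht (e i).2
    -- for each i with i+1 < n, find a zero of f' in between
    have step : ∀ i : ℕ, ∀ h : i + 1 < n, ∃ c : ℝ,
        c ∈ Ioo (x ⟨i, by omega⟩) (x ⟨i+1, h⟩) ∧ f' c = 0 := by
      intro i h
      have hab : x ⟨i, by omega⟩ < x ⟨i+1, h⟩ := hxmono (Fin.mk_lt_mk.mpr (by omega))
      have hpos0 : 0 < x ⟨i, by omega⟩ := (hxZ _).1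
      have hcont : ContinuousOn f (Icc (x ⟨i, by omega⟩) (x ⟨i+1, h⟩)) := by
        intro y hy
        have : 0 < y := lt_of_lt_of_le hpos0 hy.1
        exact ((hd y this).continuousAt).continuousWithinAt
      have hderiv : ∀ y ∈ Ioo (x ⟨i, by omega⟩) (x ⟨i+1, h⟩), HasDerivAt f (f' y) y :=
        fun y hy => hd y (lt_trans hpos0 hy.1)
      have heq : f (x ⟨i, by omega⟩) = f (x ⟨i+1, h⟩) := by
        rw [(hxZ _).2, (hxZ _).2]
      obtain ⟨c, hc1, hc2⟩ := exists_hasDerivAt_eq_zero hab hcont heq hderiv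
      exact ⟨c, hc1, hc2⟩
    let W : Fin (n-1) → ℝ := fun i =>
      Classical.choose (step i.1 (by omega))
    have hW : ∀ i : Fin (n-1), W i ∈ Ioo (x ⟨i.1, by omega⟩) (x ⟨i.1+1, by omega⟩) ∧
        f' (W i) = 0 := fun i => Classical.choose_spec (step i.1 (by omega))
    have hWZ' : ∀ i, W i ∈ Z' := by
      intro i
      refine ⟨lt_trans (hxZ ⟨i.1, by omega⟩).1 (hW i).1.1, (hW i).2⟩
    have hWmono : StrictMono W := by
      intro i j hij
      have h1 : W i < x ⟨i.1+1, by omega⟩ := (hW i).1.2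
      have h2 : x ⟨j.1, by omega⟩ < W j := (hW j).1.1
      have hij' : i.1 < j.1 := hij
      have h3 : x ⟨i.1+1, by omega⟩ ≤ x ⟨j.1, by omega⟩ :=
        hxmono.monotone (Fin.mk_le_mk.mpr (by omega))
      linarith
    have hrange : Set.range W ⊆ Z' := Set.range_subset_iff.mpr hWZ'
    have hcard : n - 1 ≤ Z'.ncard := by
      have h1 : (Set.range W).ncard ≤ Z'.ncard := Set.ncard_le_ncard hrange hZ'
      have h2 : (Set.range W).ncard = n - 1 := by
        rw [← Set.image_univ, Set.ncard_image_of_injOn (hWmono.injective.injOn),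
          Set.ncard_univ]
        simp
      omega
    omega
  have hfin : Z.Finite := by
    by_contra hinf
    have hinfZ : Z.Infinite := hinf
    obtain ⟨t, ht, hcard⟩ := hinfZ.exists_subset_card_eq (Z'.ncard + 2)
    have := key t ht
    omega
  refine ⟨hfin, ?_⟩
  have := key hfin.toFinset (by simp)
  rwa [← Set.ncard_eq_toFinset_card Z hfin] at this

lemma const_on_Ioi (g g' : ℝ → ℝ) (hd : ∀ x : ℝ, 0 < x → HasDerivAt g (g' x) x)
    (hz : ∀ x : ℝ, 0 < x → g' x = 0) :
    ∀ x : ℝ, 0 < x → g x = g 1 := by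
  have main : ∀ a b : ℝ, 0 < a → a < b → g a = g b := by
    intro a b ha hab
    have hcont : ContinuousOn g (Icc a b) := by
      intro y hy
      exact ((hd y (lt_of_lt_of_le ha hy.1)).continuousAt).continuousWithinAt
    obtain ⟨c, hc1, hc2⟩ := exists_hasDerivAt_eq_slope g g' hab hcont
      (fun y hy => hd y (lt_trans ha hy.1))
    rw [hz c (lt_trans ha hc1.1)] at hc2
    have hba : b - a ≠ 0 := by linarith
    have : g b - g a = 0 := by
      rcases div_eq_zero_iff.mp hc2.symm with h | h
      · exact h
      · exact absurd h hba
    linarith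
  intro x hx
  rcases lt_trichotomy x 1 with h | h | h
  · exact main x 1 hx h
  · rw [h]
  · exact (main 1 x one_pos h).symm

lemma genpoly_zeros {ι : Type*} [DecidableEq ι] (s : Finset ι) (c r : ι → ℝ) :
    (∀ x : ℝ, 0 < x → ∑ k ∈ s, c k * x ^ r k = 0) ∨
    ({x : ℝ | 0 < x ∧ ∑ k ∈ s, c k * x ^ r k = 0}.Finite ∧
      {x : ℝ | 0 < x ∧ ∑ k ∈ s, c k * x ^ r k = 0}.ncard < s.card) := by
  classical
  induction s using Finset.induction_on generalizing c r with
  | empty => left; intro x _; simp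
  | @insert k₀ s hk₀ ih =>
    set g : ℝ → ℝ := fun x => ∑ k ∈ insert k₀ s, c k * x ^ (r k - r k₀) with hg
    have hfg : ∀ x : ℝ, 0 < x →
        (∑ k ∈ insert k₀ s, c k * x ^ r k) = x ^ r k₀ * g x := by
      intro x hx
      rw [hg, Finset.mul_sum]
      refine Finset.sum_congr rfl fun k _ => ?_
      have hxx : x ^ r k₀ * x ^ (r k - r k₀) = x ^ r k := by
        rw [← Real.rpow_add hx]; congr 1; ring
      rw [← hxx]; ring
    set g' : ℝ → ℝ := fun x => ∑ k ∈ s, (c k * (r k - r k₀)) * x ^ (r k - r k₀ - 1) with hg'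
    have hder : ∀ x : ℝ, 0 < x → HasDerivAt g (g' x) x := by
      intro x hx
      have h1 : HasDerivAt (fun y : ℝ => ∑ k ∈ insert k₀ s, c k * y ^ (r k - r k₀))
          (∑ k ∈ insert k₀ s, c k * ((r k - r k₀) * x ^ (r k - r k₀ - 1))) x := by
        apply HasDerivAt.fun_sum
        intro k _
        exact (Real.hasDerivAt_rpow_const (Or.inl (ne_of_gt hx))).const_mul (c k)
      have h2 : (∑ k ∈ insert k₀ s, c k * ((r k - r k₀) * x ^ (r k - r k₀ - 1))) = g' x := by
        rw [Finset.sum_insert hk₀, hg']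
        simp only [sub_self]
        rw [show c k₀ * (0 * x ^ ((0:ℝ) - 1)) = 0 by ring, zero_add]
        exact Finset.sum_congr rfl fun k _ => by ring
      rw [← h2]
      exact h1
    rcases ih (fun k => c k * (r k - r k₀)) (fun k => r k - r k₀ - 1) with hleft | ⟨hfin, hlt⟩
    · -- derivative identically zero : g constant
      have hconst := const_on_Ioi g g' hder (fun x hx => hleft x hx)
      by_cases hg1 : g 1 = 0
      · left
        intro x hx
        rw [hfg x hx, hconst x hx, hg1, mul_zero]
      · right
        have hempty : {x : ℝ | 0 < x ∧ ∑ k ∈ insert k₀ s, c k * x ^ r k = 0} = ∅ := by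
          ext x
          simp only [Set.mem_setOf_eq, Set.mem_empty_iff_false, iff_false, not_and]
          intro hx hzero
          rw [hfg x hx, hconst x hx] at hzero
          exact hg1 (by
            have := (Real.rpow_pos_of_pos hx (r k₀)).ne'
            exact (mul_eq_zero.mp hzero).resolve_left this)
        rw [hempty]
        refine ⟨Set.finite_empty, ?_⟩
        rw [Set.ncard_empty]
        rw [Finset.card_insert_of_notMem hk₀]
        omega
    · right
      have hzg' : {x : ℝ | 0 < x ∧ g' x = 0} = {x : ℝ | 0 < x ∧
          ∑ k ∈ s, (c k * (r k - r k₀)) * x ^ (r k - r k₀ - 1) = 0} := rfl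
      obtain ⟨hfin2, hcard2⟩ := rolle_count g g' hder (by rw [hzg']; exact hfin)
      have hsets : {x : ℝ | 0 < x ∧ ∑ k ∈ insert k₀ s, c k * x ^ r k = 0}
          = {x : ℝ | 0 < x ∧ g x = 0} := by
        ext x
        simp only [Set.mem_setOf_eq]
        constructor
        · rintro ⟨hx, h0⟩
          refine ⟨hx, ?_⟩
          rw [hfg x hx] at h0
          exact (mul_eq_zero.mp h0).resolve_left (Real.rpow_pos_of_pos hx (r k₀)).ne'
        · rintro ⟨hx, h0⟩
          exact ⟨hx, by rw [hfg x hx, h0, mul_zero]⟩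
      rw [hsets]
      refine ⟨hfin2, ?_⟩
      rw [Finset.card_insert_of_notMem hk₀]
      have : {x : ℝ | 0 < x ∧ g' x = 0}.ncard < s.card := by rw [hzg']; exact hlt
      omega

noncomputable def PPn (a : ℕ → ℝ) : ℕ → ℝ → ℝ → ℝ
  | 0, h, _ => h
  | (n+1), h, μ => PPn a n (h + Real.sqrt (1 - a n * μ)) μ *
      PPn a n (h - Real.sqrt (1 - a n * μ)) μ

lemma PPn_zero (a : ℕ → ℝ) (n : ℕ) (μ : ℝ) (c : ℕ → ℝ)
    (hsq : ∀ i < n, c i ^ 2 = 1 - a i * μ) :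
    ∀ h : ℝ, h + ∑ i ∈ range n, c i = 0 → PPn a n h μ = 0 := by
  induction n with
  | zero => intro h h0; simpa [PPn] using h0
  | succ n ih =>
    intro h h0
    have hsq' : ∀ i < n, c i ^ 2 = 1 - a i * μ := fun i hi => hsq i (by omega)
    have hcn : c n = Real.sqrt (1 - a n * μ) ∨ c n = -Real.sqrt (1 - a n * μ) := by
      have h1 : Real.sqrt (1 - a n * μ) = |c n| := by
        rw [← hsq n (by omega), Real.sqrt_sq_eq_abs]
      rcases abs_choice (c n) with h2 | h2
      · left; rw [h1, h2]
      · right; rw [h1, h2]; ring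
    have hsum : (h + c n) + ∑ i ∈ range n, c i = 0 := by
      rw [Finset.sum_range_succ] at h0; linarith
    show PPn a n (h + Real.sqrt (1 - a n * μ)) μ *
        PPn a n (h - Real.sqrt (1 - a n * μ)) μ = 0
    rcases hcn with h2 | h2
    · rw [mul_eq_zero]; left
      apply ih hsq' (h + Real.sqrt (1 - a n * μ))
      rw [← h2]; exact hsum
    · rw [mul_eq_zero]; right
      apply ih hsq' (h - Real.sqrt (1 - a n * μ))
      rw [show h - Real.sqrt (1 - a n * μ) = h + c n by rw [h2]; ring]
      exact hsum

lemma PPn_ne (a : ℕ → ℝ) (n : ℕ) (μ : ℝ) :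
    ∀ h : ℝ, (∀ e : ℕ → ℝ,
      (∀ i < n, e i = Real.sqrt (1 - a i * μ) ∨ e i = -Real.sqrt (1 - a i * μ)) →
      h + ∑ i ∈ range n, e i ≠ 0) → PPn a n h μ ≠ 0 := by
  induction n with
  | zero =>
    intro h hyp
    have := hyp (fun _ => 0) (by omega)
    simpa [PPn] using this
  | succ n ih =>
    intro h hyp
    show PPn a n (h + Real.sqrt (1 - a n * μ)) μ *
        PPn a n (h - Real.sqrt (1 - a n * μ)) μ ≠ 0
    apply mul_ne_zero
    · apply ih
      intro e he
      have := hyp (fun i => if i = n then Real.sqrt (1 - a n * μ) else e i) ?_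
      · intro hcon
        apply this
        rw [Finset.sum_range_succ]
        have hsum : ∑ i ∈ range n, (if i = n then Real.sqrt (1 - a n * μ) else e i)
            = ∑ i ∈ range n, e i := by
          refine Finset.sum_congr rfl fun i hi => ?_
          rw [if_neg (by simp at hi; omega)]
        rw [hsum, if_pos rfl]
        linarith
      · intro i hi
        by_cases hin : i = n
        · rw [if_pos hin]; subst hin; left; rfl
        · rw [if_neg hin]; exact he i (by omega)
    · apply ih
      intro e he
      have := hyp (fun i => if i = n then -Real.sqrt (1 - a n * μ) else e i) ?_
      · intro hcon
        apply this
        rw [Finset.sum_range_succ]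
        have hsum : ∑ i ∈ range n, (if i = n then -Real.sqrt (1 - a n * μ) else e i)
            = ∑ i ∈ range n, e i := by
          refine Finset.sum_congr rfl fun i hi => ?_
          rw [if_neg (by simp at hi; omega)]
        rw [hsum, if_pos rfl]
        linarith
      · intro i hi
        by_cases hin : i = n
        · rw [if_pos hin]; subst hin; right; rfl
        · rw [if_neg hin]; exact he i (by omega)

-- rings
abbrev Rg : Type := MvPolynomial ℕ ℝ
noncomputable instance iRgCR : CommRing Rg := inferInstance
abbrev Sg : Type := Polynomial Rg
noncomputable instance iSgCR : CommRing Sg := inferInstance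
abbrev Pg : Type := Polynomial Sg
noncomputable instance iPgCR : CommRing Pg := inferInstance
instance iPgDom : IsDomain Pg := inferInstance
instance iPgCZ : CharZero Pg := inferInstance
abbrev Tg : Type := Polynomial Pg
noncomputable instance iTgCR : CommRing Tg := inferInstance

noncomputable def ev3 (aa : ℕ → ℝ) (μ h : ℝ) : Pg →+* ℝ :=
  Polynomial.eval₂RingHom (Polynomial.eval₂RingHom (MvPolynomial.eval aa) μ) h

lemma coeff_eval₂_neg (q : Tg) (n : ℕ) :
    (Polynomial.eval₂ (Polynomial.C : Pg →+* Tg) (-(Polynomial.X : Tg)) q).coeff n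
      = (-1)^n * q.coeff n := by
  induction q using Polynomial.induction_on' with
  | add p q hp hq =>
    rw [Polynomial.eval₂_add, Polynomial.coeff_add, hp, hq, Polynomial.coeff_add]
    ring
  | monomial k b =>
    rw [Polynomial.eval₂_monomial, Polynomial.coeff_monomial]
    rw [neg_pow]
    have h1 : ((Polynomial.C b : Tg)) * ((-1:Tg)^k * (Polynomial.X:Tg)^k)
        = Polynomial.C ((-1:Pg)^k * b) * (Polynomial.X:Tg)^k := by
      rw [map_mul, map_pow, map_neg, map_one]; ring
    rw [h1, Polynomial.coeff_C_mul, Polynomial.coeff_X_pow]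
    rcases eq_or_ne n k with h | h
    · subst h; simp
    · simp [h, Ne.symm h]

lemma squash (F : Pg) (k : ℕ) :
    ∃ F' : Pg, ∀ (aa : ℕ → ℝ) (h μ t : ℝ), t ^ 2 = 1 - aa k * μ →
      ev3 aa μ (h + t) F * ev3 aa μ (h - t) F = ev3 aa μ h F' := by
  classical
  let CC : Sg →+* Tg := (Polynomial.C : Pg →+* Tg).comp (Polynomial.C : Sg →+* Pg)
  let up : Tg := Polynomial.C Polynomial.X + Polynomial.X
  let um : Tg := Polynomial.C Polynomial.X - Polynomial.X
  let ψp : Tg := Polynomial.eval₂ CC up F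
  let ψm : Tg := Polynomial.eval₂ CC um F
  let P : Tg := ψp * ψm
  let σ : Tg →+* Tg := Polynomial.eval₂RingHom (Polynomial.C : Pg →+* Tg) (-(Polynomial.X : Tg))
  have hσC : ∀ u : Pg, σ (Polynomial.C u) = Polynomial.C u := fun u => Polynomial.eval₂_C _ _
  have hσX : σ (Polynomial.X : Tg) = -Polynomial.X := Polynomial.eval₂_X _ _
  have hcomp : σ.comp CC = CC := by
    apply RingHom.ext; intro s
    show σ (Polynomial.C (Polynomial.C s)) = Polynomial.C (Polynomial.C s)
    exact hσC _
  have hσψp : σ ψp = ψm := by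
    show σ (Polynomial.eval₂ CC up F) = Polynomial.eval₂ CC um F
    rw [Polynomial.hom_eval₂ F CC σ up, hcomp]
    congr 1
    show σ (Polynomial.C Polynomial.X + Polynomial.X) = Polynomial.C Polynomial.X - Polynomial.X
    rw [map_add, hσC, hσX, sub_eq_add_neg]
  have hσψm : σ ψm = ψp := by
    show σ (Polynomial.eval₂ CC um F) = Polynomial.eval₂ CC up F
    rw [Polynomial.hom_eval₂ F CC σ um, hcomp]
    congr 1
    show σ (Polynomial.C Polynomial.X - Polynomial.X) = Polynomial.C Polynomial.X + Polynomial.X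
    rw [map_sub, hσC, hσX, sub_neg_eq_add]
  have hσP : σ P = P := by
    show σ (ψp * ψm) = ψp * ψm
    rw [map_mul, hσψp, hσψm, mul_comm]
  have hodd : ∀ m, Odd m → P.coeff m = 0 := by
    intro m hm
    have h1 : (σ P).coeff m = (-1)^m * P.coeff m := coeff_eval₂_neg P m
    rw [hσP, hm.neg_one_pow] at h1
    have h2 : (2 : Pg) * P.coeff m = 0 := by linear_combination h1
    have h20 : (2 : Pg) ≠ 0 := two_ne_zero
    exact (mul_eq_zero.mp h2).resolve_left h20
  let Q : Sg := (1 : Sg) - Polynomial.C (MvPolynomial.X k) * Polynomial.X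
  let F' : Pg := ∑ m ∈ range (P.natDegree + 1), P.coeff m * Polynomial.C (Q ^ (m / 2))
  refine ⟨F', ?_⟩
  intro aa h μ t ht
  set E : Pg →+* ℝ := ev3 aa μ h with hE
  let K : Tg →+* ℝ := Polynomial.eval₂RingHom E t
  have hKC : ∀ u : Pg, K (Polynomial.C u) = E u := fun u => Polynomial.eval₂_C _ _
  have hKX : K (Polynomial.X : Tg) = t := Polynomial.eval₂_X _ _
  have hEC : ∀ s : Sg, E (Polynomial.C s) = Polynomial.eval₂ (MvPolynomial.eval aa) μ s :=
    fun s => Polynomial.eval₂_C _ _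
  have hEX : E (Polynomial.X : Pg) = h := Polynomial.eval₂_X _ _
  have hKcomp : K.comp CC = Polynomial.eval₂RingHom (MvPolynomial.eval aa) μ := by
    apply RingHom.ext; intro s
    show K (Polynomial.C (Polynomial.C s)) = _
    rw [hKC, hEC]; rfl
  have hKψp : K ψp = ev3 aa μ (h + t) F := by
    show K (Polynomial.eval₂ CC up F) = _
    rw [Polynomial.hom_eval₂ F CC K up, hKcomp]
    have hup : K up = h + t := by
      show K (Polynomial.C Polynomial.X + Polynomial.X) = h + t
      rw [map_add, hKC, hKX, hEX]
    rw [hup]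
    rfl
  have hKψm : K ψm = ev3 aa μ (h - t) F := by
    show K (Polynomial.eval₂ CC um F) = _
    rw [Polynomial.hom_eval₂ F CC K um, hKcomp]
    have hum : K um = h - t := by
      show K (Polynomial.C Polynomial.X - Polynomial.X) = h - t
      rw [map_sub, hKC, hKX, hEX]
    rw [hum]
    rfl
  have hKP1 : K P = ev3 aa μ (h + t) F * ev3 aa μ (h - t) F := by
    show K (ψp * ψm) = _
    rw [map_mul, hKψp, hKψm]
  have hEQ : E (Polynomial.C Q) = 1 - aa k * μ := by
    rw [hEC]
    show Polynomial.eval₂ (MvPolynomial.eval aa) μ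
        ((1 : Sg) - Polynomial.C (MvPolynomial.X k) * Polynomial.X) = _
    rw [Polynomial.eval₂_sub, Polynomial.eval₂_one, Polynomial.eval₂_mul,
      Polynomial.eval₂_C, Polynomial.eval₂_X, MvPolynomial.eval_X]
  have hKP2 : K P = E F' := by
    have h1 : K P = ∑ m ∈ range (P.natDegree + 1), E (P.coeff m) * t ^ m := by
      show Polynomial.eval₂ E t P = _
      exact Polynomial.eval₂_eq_sum_range E t
    have h2 : E F' = ∑ m ∈ range (P.natDegree + 1), E (P.coeff m) * (1 - aa k * μ) ^ (m / 2) := by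
      show E (∑ m ∈ range (P.natDegree + 1), P.coeff m * Polynomial.C (Q ^ (m / 2))) = _
      rw [map_sum]
      refine Finset.sum_congr rfl fun m _ => ?_
      rw [map_mul, show (Polynomial.C (Q ^ (m / 2)) : Pg) = (Polynomial.C Q) ^ (m / 2) from
        map_pow _ _ _, map_pow, hEQ]
    rw [h1, h2]
    refine Finset.sum_congr rfl fun m _ => ?_
    rcases Nat.even_or_odd m with he | ho
    · congr 1
      conv_lhs => rw [← Nat.div_two_mul_two_of_even he]
      rw [pow_mul', ht]
    · rw [hodd m ho, map_zero, zero_mul, zero_mul]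
  rw [← hKP1, hKP2]

lemma PPn_poly (n : ℕ) : ∃ F : Pg, ∀ (aa : ℕ → ℝ) (h μ : ℝ),
    (∀ i < n, 0 ≤ 1 - aa i * μ) → PPn aa n h μ = ev3 aa μ h F := by
  induction n with
  | zero =>
    refine ⟨Polynomial.X, fun aa h μ _ => ?_⟩
    show h = ev3 aa μ h Polynomial.X
    exact (Polynomial.eval₂_X _ _).symm
  | succ n ih =>
    obtain ⟨F, hF⟩ := ih
    obtain ⟨F', hF'⟩ := squash F n
    refine ⟨F', fun aa h μ hdom => ?_⟩
    have hdom' : ∀ i < n, 0 ≤ 1 - aa i * μ := fun i hi => hdom i (by omega)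
    have ht : (Real.sqrt (1 - aa n * μ)) ^ 2 = 1 - aa n * μ :=
      Real.sq_sqrt (hdom n (by omega))
    show PPn aa n (h + Real.sqrt (1 - aa n * μ)) μ *
        PPn aa n (h - Real.sqrt (1 - aa n * μ)) μ = _
    rw [hF aa _ μ hdom', hF aa _ μ hdom']
    exact hF' aa h μ _ ht




-- auxiliary quantities
def auxS {d : ℕ} (ξ : Fin d → ℝ) : ℝ := ∑ j, (2 - 2 * Real.cos (ξ j))

def auxMu (α : ℝ) {d : ℕ} (ξ : Fin d → ℝ) : ℝ := auxS ξ ^ (2 - α) / α ^ 2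

lemma critS_pos {α : ℝ} {d : ℕ} {v ξ : Fin d → ℝ} (hξ : ξ ∈ critSet α d v) :
    0 < auxS ξ := by
  obtain ⟨hbox, hne, -⟩ := hξ
  obtain ⟨i, hi⟩ := Function.ne_iff.mp hne
  have hπ := Real.pi_pos
  have hcos : Real.cos (ξ i) < 1 := by
    refine lt_of_le_of_ne (Real.cos_le_one _) fun hc => hi ?_
    have hb := hbox i
    exact (Real.cos_eq_one_iff_of_lt_of_lt (by linarith [hb.1]) (by linarith [hb.2])).mp hc
  refine Finset.sum_pos' (fun j _ => by nlinarith [Real.cos_le_one (ξ j)]) ⟨i, Finset.mem_univ i, by nlinarith⟩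

lemma crit_grad_eq {α : ℝ} {d : ℕ} {v ξ : Fin d → ℝ} (hξ : ξ ∈ critSet α d v) (i : Fin d) :
    α * Real.sin (ξ i) / (auxS ξ) ^ ((2 - α) / 2) = v i := by
  have h := congrFun hξ.2.2 i
  simpa [gradOmega, auxS] using h

lemma crit_sin_eq {α : ℝ} (hα0 : 0 < α) {d : ℕ} {v ξ : Fin d → ℝ}
    (hξ : ξ ∈ critSet α d v) (i : Fin d) :
    Real.sin (ξ i) = v i * (auxS ξ) ^ ((2 - α) / 2) / α := by
  have h := crit_grad_eq hξ i
  have hpow : (0:ℝ) < auxS ξ ^ ((2 - α) / 2) := Real.rpow_pos_of_pos (critS_pos hξ) _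
  field_simp at h ⊢
  linear_combination h

lemma crit_sin_sq {α : ℝ} (hα0 : 0 < α) {d : ℕ} {v ξ : Fin d → ℝ}
    (hξ : ξ ∈ critSet α d v) (i : Fin d) :
    Real.sin (ξ i) ^ 2 = v i ^ 2 * auxMu α ξ := by
  have hS := critS_pos hξ
  rw [crit_sin_eq hα0 hξ i, div_pow, mul_pow]
  have h2 : (auxS ξ ^ ((2 - α) / 2)) ^ 2 = auxS ξ ^ (2 - α) := by
    rw [← Real.rpow_natCast (auxS ξ ^ ((2 - α) / 2)) 2, ← Real.rpow_mul hS.le]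
    norm_num
  rw [h2, auxMu]
  ring

lemma crit_mu_pos {α : ℝ} (hα0 : 0 < α) {d : ℕ} {v ξ : Fin d → ℝ}
    (hξ : ξ ∈ critSet α d v) : 0 < auxMu α ξ :=
  div_pos (Real.rpow_pos_of_pos (critS_pos hξ) _) (by positivity)

lemma crit_S_eq {α : ℝ} (hα0 : 0 < α) (h2α : 0 < 2 - α) {d : ℕ} {v ξ : Fin d → ℝ}
    (hξ : ξ ∈ critSet α d v) :
    α ^ (2 / (2 - α)) * auxMu α ξ ^ ((2 - α)⁻¹) = auxS ξ := by
  have hS := critS_pos hξ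
  have hμ : auxMu α ξ = auxS ξ ^ (2 - α) / α ^ 2 := rfl
  rw [hμ, Real.div_rpow (Real.rpow_nonneg hS.le _) (by positivity)]
  rw [← Real.rpow_natCast α 2, ← Real.rpow_mul hα0.le, ← Real.rpow_mul hS.le]
  rw [mul_inv_cancel₀ h2α.ne', Real.rpow_one]
  have hexp : (2:ℝ) / (2 - α) = ((2:ℕ):ℝ) * (2 - α)⁻¹ := by push_cast; ring
  rw [hexp]
  have hpos : (0:ℝ) < α ^ (((2:ℕ):ℝ) * (2 - α)⁻¹) := Real.rpow_pos_of_pos hα0 _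
  field_simp


set_option maxHeartbeats 2000000

/-- Theorem 3.3: uniform bound on the number of critical points,
and emptiness for large `v`. -/
theorem critical_points_uniformly_bounded
    (α : ℝ) (hα : 1 < α ∧ α < 2) (d : ℕ) (hd : 1 ≤ d) :
    (∃ M : ℕ, ∀ v : Fin d → ℝ,
      (critSet α d v).Finite ∧ (critSet α d v).ncard ≤ M) ∧
    (∃ R > (0:ℝ), ∀ v : Fin d → ℝ,
      R < Real.sqrt (∑ i, v i ^ 2) → critSet α d v = ∅) := by
  classical
  obtain ⟨hα1, hα2⟩ := hα
  have hα0 : (0:ℝ) < α := by linarith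
  have h2α : (0:ℝ) < 2 - α := by linarith
  set β : ℝ := (2 - α)⁻¹ with hβdef
  have hβpos : 0 < β := inv_pos.mpr h2α
  have hβ1 : 1 < β := by
    rw [hβdef, lt_inv_comm₀ one_pos h2α]
    · linarith
  set Cα : ℝ := α ^ (2 / (2 - α)) with hCαdef
  have hCαpos : 0 < Cα := Real.rpow_pos_of_pos hα0 _
  constructor
  · -- Part (i)
    obtain ⟨F, hF⟩ := PPn_poly d
    set sub : Pg := Polynomial.C (Polynomial.C (MvPolynomial.C (Cα/2))) * Polynomial.X
        - Polynomial.C (Polynomial.C (MvPolynomial.C (d:ℝ))) with hsubdef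
    set Fhat : Pg := Polynomial.eval₂ (Polynomial.C : Sg →+* Pg) sub F with hFhatdef
    have hFhat : ∀ (aa : ℕ → ℝ) (μ w : ℝ), ev3 aa μ w Fhat = ev3 aa μ (Cα/2 * w - d) F := by
      intro aa μ w
      show (ev3 aa μ w) (Polynomial.eval₂ _ _ F) = _
      rw [Polynomial.hom_eval₂ F (Polynomial.C : Sg →+* Pg) (ev3 aa μ w) sub]
      have hc : (ev3 aa μ w).comp (Polynomial.C : Sg →+* Pg)
          = Polynomial.eval₂RingHom (MvPolynomial.eval aa) μ := by
        apply RingHom.ext; intro s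
        show (ev3 aa μ w) (Polynomial.C s) = _
        exact Polynomial.eval₂_C _ _
      have hconst : ∀ r : ℝ, (ev3 aa μ w) (Polynomial.C (Polynomial.C (MvPolynomial.C r))) = r := by
        intro r
        show Polynomial.eval₂ _ w (Polynomial.C (Polynomial.C (MvPolynomial.C r))) = r
        rw [Polynomial.eval₂_C]
        show Polynomial.eval₂ _ μ (Polynomial.C (MvPolynomial.C r)) = r
        rw [Polynomial.eval₂_C]
        exact MvPolynomial.eval_C _
      have hsub : (ev3 aa μ w) sub = Cα/2 * w - d := by
        rw [hsubdef, map_sub, map_mul, hconst, hconst]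
        have hX : (ev3 aa μ w) Polynomial.X = w := Polynomial.eval₂_X _ _
        rw [hX]
      rw [hc, hsub]
      rfl
    set Ed : ℕ := Fhat.natDegree with hEddef
    set Dd : ℕ := (Finset.range (Ed+1)).sup (fun p => (Fhat.coeff p).natDegree) with hDddef
    set sfin : Finset (ℕ × ℕ) := Finset.range (Ed+1) ×ˢ Finset.range (Dd+1) with hsfindef
    refine ⟨max (3^d) ((Ed+1) * (Dd+1) * (2^d * 2^d)), fun v => ?_⟩
    by_cases hv0 : v = 0
    · -- v = 0 : at most 3^d points
      subst hv0
      have hmem : ∀ ξ ∈ critSet α d 0, ∀ i, ξ i = -π ∨ ξ i = 0 ∨ ξ i = π := by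
        intro ξ hξ i
        have hsin : Real.sin (ξ i) = 0 := by
          have := crit_sin_eq hα0 hξ i
          simpa using this
        obtain ⟨n, hn⟩ := Real.sin_eq_zero_iff.mp hsin
        have hπ := Real.pi_pos
        have hb := hξ.1 i
        have habs : |(n:ℝ) * π| ≤ π := by rw [hn]; exact abs_le.mpr ⟨hb.1, hb.2⟩
        rw [abs_mul, abs_of_pos hπ] at habs
        have h1 : |(n:ℝ)| ≤ 1 := le_of_mul_le_mul_right (by linarith) hπ
        have h2 : |n| ≤ 1 := by exact_mod_cast h1
        have h3 := abs_le.mp h2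
        have hl : -1 ≤ n := h3.1
        have hr : n ≤ 1 := h3.2
        interval_cases n
        · left; rw [← hn]; push_cast; ring
        · right; left; rw [← hn]; push_cast; ring
        · right; right; rw [← hn]; push_cast; ring
      set ψ : (Fin d → ℝ) → (Fin d → Fin 3) := fun ξ i =>
        if ξ i = -π then (0 : Fin 3) else if ξ i = 0 then 1 else 2 with hψdef
      have hπ := Real.pi_pos
      have hne1 : -π ≠ (0:ℝ) := by simp [Real.pi_ne_zero]
      have hne2 : -π ≠ π := by linarith
      have hne3 : (0:ℝ) ≠ π := ne_of_lt hπ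
      have hv0 : ∀ ζ : Fin d → ℝ, ∀ i, ζ i = -π → ψ ζ i = 0 := fun ζ i h => by
        simp only [hψdef]; rw [h, if_pos rfl]
      have hv1 : ∀ ζ : Fin d → ℝ, ∀ i, ζ i = 0 → ψ ζ i = 1 := fun ζ i h => by
        simp only [hψdef]; rw [h, if_neg (by linarith), if_pos rfl]
      have hv2 : ∀ ζ : Fin d → ℝ, ∀ i, ζ i = π → ψ ζ i = 2 := fun ζ i h => by
        simp only [hψdef]; rw [h, if_neg (by linarith), if_neg (by linarith)]
      have hinj : Set.InjOn ψ (critSet α d 0) := by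
        intro ξ hξ η hη heq
        funext i
        have hi := congrFun heq i
        rcases hmem ξ hξ i with h1 | h1 | h1 <;> rcases hmem η hη i with h2 | h2 | h2
        · rw [h1, h2]
        · exfalso; rw [hv0 ξ i h1, hv1 η i h2] at hi; exact absurd hi (by decide)
        · exfalso; rw [hv0 ξ i h1, hv2 η i h2] at hi; exact absurd hi (by decide)
        · exfalso; rw [hv1 ξ i h1, hv0 η i h2] at hi; exact absurd hi (by decide)
        · rw [h1, h2]
        · exfalso; rw [hv1 ξ i h1, hv2 η i h2] at hi; exact absurd hi (by decide)
        · exfalso; rw [hv2 ξ i h1, hv0 η i h2] at hi; exact absurd hi (by decide)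
        · exfalso; rw [hv2 ξ i h1, hv1 η i h2] at hi; exact absurd hi (by decide)
        · rw [h1, h2]
      constructor
      · exact Set.Finite.of_finite_image (Set.toFinite _) hinj
      · refine le_trans ?_ (le_max_left _ _)
        have := Set.ncard_le_ncard_of_injOn ψ (fun ξ _ => Set.mem_univ ξ) hinj Set.finite_univ
        refine le_trans this ?_
        rw [Set.ncard_univ, Nat.card_eq_fintype_card]
        simp
    · -- main case v ≠ 0
      set aa : ℕ → ℝ := fun i => if h : i < d then v ⟨i, h⟩ ^ 2 else 0 with haa
      have haan : ∀ i, 0 ≤ aa i := by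
        intro i; rw [haa]; dsimp only; split
        · exact sq_nonneg _
        · exact le_rfl
      set Sa : ℝ := ∑ i, v i ^ 2 with hSadef
      have hSa : 0 < Sa := by
        obtain ⟨i, hi⟩ := Function.ne_iff.mp hv0
        exact Finset.sum_pos' (fun j _ => sq_nonneg _)
          ⟨i, Finset.mem_univ i, pow_two_pos_of_ne_zero hi⟩
      have haale : ∀ i, i < d → aa i ≤ Sa := by
        intro i hi
        rw [haa]; dsimp only; rw [dif_pos hi]
        exact Finset.single_le_sum (f := fun j => v j ^ 2) (fun j _ => sq_nonneg _)
          (Finset.mem_univ _)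
      have haasum : ∑ i ∈ Finset.range d, aa i = Sa := by
        rw [← Fin.sum_univ_eq_sum_range aa d, hSadef]
        refine Finset.sum_congr rfl fun i _ => ?_
        rw [haa]; dsimp only; rw [dif_pos i.isLt]
      set cfn : ℕ × ℕ → ℝ := fun pq => MvPolynomial.eval aa ((Fhat.coeff pq.1).coeff pq.2)
        with hcfn
      set rfn : ℕ × ℕ → ℝ := fun pq => (pq.2 : ℝ) + (pq.1 : ℝ) * β with hrfn
      set G : ℝ → ℝ := fun x => ∑ pq ∈ sfin, cfn pq * x ^ rfn pq with hG
      have hGeq : ∀ x : ℝ, 0 < x → G x = ev3 aa x (Cα/2 * x ^ β - d) F := by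
        intro x hx
        rw [← hFhat]
        have h1 : ev3 aa x (x ^ β) Fhat
            = ∑ p ∈ Finset.range (Ed+1),
                (∑ q ∈ Finset.range (Dd+1),
                  MvPolynomial.eval aa ((Fhat.coeff p).coeff q) * x ^ q) * (x ^ β) ^ p := by
          show Polynomial.eval₂ (Polynomial.eval₂RingHom (MvPolynomial.eval aa) x) (x ^ β) Fhat
              = _
          rw [Polynomial.eval₂_eq_sum_range' _ (Nat.lt_succ_self _) _]
          refine Finset.sum_congr rfl fun p hp => ?_
          congr 1
          show Polynomial.eval₂ (MvPolynomial.eval aa) x (Fhat.coeff p) = _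
          exact Polynomial.eval₂_eq_sum_range' _ (Nat.lt_succ_of_le (Finset.le_sup (f := fun p => (Fhat.coeff p).natDegree) hp)) _
        rw [h1, hG]
        dsimp only
        rw [hsfindef, Finset.sum_product]
        refine Finset.sum_congr rfl fun p hp => ?_
        rw [Finset.sum_mul]
        refine Finset.sum_congr rfl fun q hq => ?_
        rw [hcfn, hrfn]
        dsimp only
        have hxq : x ^ ((q:ℕ):ℝ) = x ^ (q:ℕ) := Real.rpow_natCast x q
        have hxp : (x ^ β) ^ (p:ℕ) = x ^ ((p:ℝ) * β) := by
          rw [← Real.rpow_natCast (x ^ β) p, ← Real.rpow_mul hx.le, mul_comm]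
        rw [Real.rpow_add hx, hxq, ← hxp]
        ring
      have hdomcrit : ∀ ξ, ξ ∈ critSet α d v → ∀ i, i < d → 0 ≤ 1 - aa i * auxMu α ξ := by
        intro ξ hξ i hi
        have h1 := crit_sin_sq hα0 hξ ⟨i, hi⟩
        have hid : aa i = v ⟨i, hi⟩ ^ 2 := by rw [haa]; dsimp only; rw [dif_pos hi]
        rw [hid]
        nlinarith [Real.sin_sq_add_cos_sq (ξ ⟨i, hi⟩), sq_nonneg (Real.cos (ξ ⟨i, hi⟩))]
      have hGzero : ∀ ξ ∈ critSet α d v, G (auxMu α ξ) = 0 := by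
        intro ξ hξ
        have hμpos := crit_mu_pos hα0 hξ
        rw [hGeq _ hμpos, ← hF aa _ _ (hdomcrit ξ hξ)]
        set cf : ℕ → ℝ := fun i => if h : i < d then Real.cos (ξ ⟨i, h⟩) else 0 with hcf
        apply PPn_zero aa d (auxMu α ξ) cf
        · intro i hi
          rw [hcf]; dsimp only; rw [dif_pos hi]
          have h1 := crit_sin_sq hα0 hξ ⟨i, hi⟩
          have hid : aa i = v ⟨i, hi⟩ ^ 2 := by rw [haa]; dsimp only; rw [dif_pos hi]
          rw [hid]
          nlinarith [Real.sin_sq_add_cos_sq (ξ ⟨i, hi⟩)]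
        · have hsum : ∑ i ∈ Finset.range d, cf i = ∑ i, Real.cos (ξ i) := by
            rw [← Fin.sum_univ_eq_sum_range cf d]
            refine Finset.sum_congr rfl fun i _ => ?_
            rw [hcf]; dsimp only; rw [dif_pos i.isLt]
          have hSexp : auxS ξ = 2 * d - 2 * ∑ i, Real.cos (ξ i) := by
            show (∑ j, (2 - 2 * Real.cos (ξ j))) = _
            rw [Finset.sum_sub_distrib, Finset.sum_const, Finset.card_univ, Fintype.card_fin,
              ← Finset.mul_sum]
            push_cast; ring
          have hCS' : Cα * auxMu α ξ ^ β = auxS ξ := crit_S_eq hα0 h2α hξ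
          rw [hsum]
          linear_combination (1/2 : ℝ) * hCS' + (1/2 : ℝ) * hSexp
      have hexG : ∃ x : ℝ, 0 < x ∧ G x ≠ 0 := by
        have t1 : Filter.Tendsto (fun x : ℝ => Cα * x ^ (β - 1))
            (nhdsWithin 0 (Set.Ioi 0)) (nhds 0) := by
          have hc : ContinuousAt (fun x : ℝ => x ^ (β - 1)) 0 :=
            Real.continuousAt_rpow_const 0 _ (Or.inr (by linarith))
          have h := (hc.tendsto.mono_left (nhdsWithin_le_nhds : nhdsWithin (0:ℝ) (Set.Ioi 0) ≤ nhds 0)).const_mul Cα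
          simpa [Real.zero_rpow (by linarith : β - 1 ≠ 0)] using h
        have t2 : Filter.Tendsto (fun x : ℝ => Cα * x ^ β)
            (nhdsWithin 0 (Set.Ioi 0)) (nhds 0) := by
          have hc : ContinuousAt (fun x : ℝ => x ^ β) 0 :=
            Real.continuousAt_rpow_const 0 _ (Or.inr (by linarith))
          have h := (hc.tendsto.mono_left (nhdsWithin_le_nhds : nhdsWithin (0:ℝ) (Set.Ioi 0) ≤ nhds 0)).const_mul Cα
          simpa [Real.zero_rpow (by linarith : β ≠ 0)] using h
        have t3 : Filter.Tendsto (fun x : ℝ => x) (nhdsWithin 0 (Set.Ioi 0)) (nhds 0) :=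
          Filter.tendsto_id.mono_left nhdsWithin_le_nhds
        haveI : (nhdsWithin (0:ℝ) (Set.Ioi 0)).NeBot := nhdsGT_neBot 0
        have e0 : ∀ᶠ x in nhdsWithin (0:ℝ) (Set.Ioi 0), 0 < x :=
          eventually_nhdsWithin_of_forall (fun x hx => hx)
        have e1 : ∀ᶠ x in nhdsWithin 0 (Set.Ioi 0), x < Sa⁻¹ :=
          t3.eventually_lt_const (inv_pos.mpr hSa)
        have e2 := t1.eventually_lt_const hSa
        have e3 := t2.eventually_lt_const two_pos
        obtain ⟨x₀, hx0, hx1, hx2, hx3⟩ := (e0.and (e1.and (e2.and e3))).exists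
        refine ⟨x₀, hx0, ?_⟩
        have hdom : ∀ i, i < d → 0 ≤ 1 - aa i * x₀ := by
          intro i hi
          have h1 : aa i * x₀ ≤ Sa * x₀ := mul_le_mul_of_nonneg_right (haale i hi) hx0.le
          have h2 : Sa * x₀ < Sa * Sa⁻¹ := mul_lt_mul_of_pos_left hx1 hSa
          rw [mul_inv_cancel₀ hSa.ne'] at h2
          linarith
        rw [hGeq x₀ hx0, ← hF aa _ x₀ hdom]
        apply PPn_ne
        intro e he hcon
        have hsplit : x₀ ^ β = x₀ ^ (β - 1) * x₀ := by
          have h := Real.rpow_add hx0 (β - 1) 1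
          rw [Real.rpow_one] at h
          calc x₀ ^ β = x₀ ^ (β - 1 + 1) := by norm_num
            _ = x₀ ^ (β - 1) * x₀ := h
        by_cases hall : ∀ i, i < d → e i = Real.sqrt (1 - aa i * x₀)
        · have hsb : ∀ i ∈ Finset.range d, e i ≤ 1 - aa i * (x₀/2) := by
            intro i hi
            have hi' := Finset.mem_range.mp hi
            rw [hall i hi']
            have h01 : 0 ≤ 1 - aa i * x₀ := hdom i hi'
            have hb2 : (0:ℝ) ≤ 1 - aa i * (x₀/2) := by nlinarith [haan i, hx0.le]
            calc Real.sqrt (1 - aa i * x₀) ≤ Real.sqrt ((1 - aa i * (x₀/2))^2) :=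
                  Real.sqrt_le_sqrt (by nlinarith [sq_nonneg (aa i * (x₀/2))])
              _ = 1 - aa i * (x₀/2) := Real.sqrt_sq hb2
          have hsum1 : ∑ i ∈ Finset.range d, e i ≤ (d:ℝ) - Sa * (x₀/2) := by
            calc ∑ i ∈ Finset.range d, e i
                ≤ ∑ i ∈ Finset.range d, (1 - aa i * (x₀/2)) := Finset.sum_le_sum hsb
              _ = (d:ℝ) - Sa * (x₀/2) := by
                  rw [Finset.sum_sub_distrib, Finset.sum_const, Finset.card_range,
                    ← Finset.sum_mul, haasum]
                  push_cast; ring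
          have hlt : Cα * x₀ ^ β < Sa * x₀ := by
            calc Cα * x₀ ^ β = (Cα * x₀ ^ (β - 1)) * x₀ := by rw [hsplit]; ring
              _ < Sa * x₀ := mul_lt_mul_of_pos_right hx2 hx0
          linarith
        · push_neg at hall
          obtain ⟨i₀, hi₀d, hi₀⟩ := hall
          have hei₀ : e i₀ = -Real.sqrt (1 - aa i₀ * x₀) := (he i₀ hi₀d).resolve_left hi₀
          have hsb : ∀ i ∈ Finset.range d, e i ≤ (if i = i₀ then (0:ℝ) else 1) := by
            intro i hi
            have hi' := Finset.mem_range.mp hi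
            by_cases hii : i = i₀
            · subst hii
              rw [if_pos rfl, hei₀]
              have := Real.sqrt_nonneg (1 - aa i * x₀)
              linarith
            · rw [if_neg hii]
              rcases he i hi' with h | h
              · rw [h]
                refine Real.sqrt_le_one.mpr ?_
                nlinarith [haan i, hx0.le]
              · rw [h]
                have := Real.sqrt_nonneg (1 - aa i * x₀)
                linarith
          have hsum1 : ∑ i ∈ Finset.range d, e i ≤ (d:ℝ) - 1 := by
            calc ∑ i ∈ Finset.range d, e i
                ≤ ∑ i ∈ Finset.range d, (if i = i₀ then (0:ℝ) else 1) := Finset.sum_le_sum hsb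
              _ = (d:ℝ) - 1 := by
                  have h1 : ∀ i ∈ Finset.range d, (if i = i₀ then (0:ℝ) else 1)
                      = 1 - (if i = i₀ then (1:ℝ) else 0) := by
                    intro i _; split_ifs <;> norm_num
                  rw [Finset.sum_congr rfl h1, Finset.sum_sub_distrib, Finset.sum_const,
                    Finset.card_range, Finset.sum_ite_eq' (Finset.range d) i₀ (fun _ => (1:ℝ)),
                    if_pos (Finset.mem_range.mpr hi₀d)]
                  push_cast; ring
          linarith
      rcases genpoly_zeros sfin cfn rfn with hzero | ⟨hAfin, hAcard⟩
      · exfalso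
        obtain ⟨x₀, hx0, hne⟩ := hexG
        exact hne (hzero x₀ hx0)
      · have hmaps : ∀ ξ ∈ critSet α d v,
            (⟨auxMu α ξ, fun i => decide (0 ≤ Real.cos (ξ i)), fun i => decide (0 ≤ ξ i)⟩
              : ℝ × ((Fin d → Bool) × (Fin d → Bool)))
            ∈ {x : ℝ | 0 < x ∧ ∑ k ∈ sfin, cfn k * x ^ rfn k = 0}
              ×ˢ (Set.univ : Set ((Fin d → Bool) × (Fin d → Bool))) := by
          intro ξ hξ
          exact ⟨⟨crit_mu_pos hα0 hξ, hGzero ξ hξ⟩, Set.mem_univ _⟩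
        set Φ : (Fin d → ℝ) → ℝ × ((Fin d → Bool) × (Fin d → Bool)) := fun ξ =>
          ⟨auxMu α ξ, fun i => decide (0 ≤ Real.cos (ξ i)), fun i => decide (0 ≤ ξ i)⟩ with hΦ
        have hinj : Set.InjOn Φ (critSet α d v) := by
          intro ξ hξ η hη heq
          have hμeq : auxMu α ξ = auxMu α η := congrArg Prod.fst heq
          have hb1 : ∀ i, (0 ≤ Real.cos (ξ i)) ↔ (0 ≤ Real.cos (η i)) := fun i =>
            decide_eq_decide.mp (congrArg (fun p => p.2.1 i) heq)
          have hb2 : ∀ i, (0 ≤ ξ i) ↔ (0 ≤ η i) := fun i =>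
            decide_eq_decide.mp (congrArg (fun p => p.2.2 i) heq)
          have hSeq : auxS ξ = auxS η := by
            rw [← crit_S_eq hα0 h2α hξ, ← crit_S_eq hα0 h2α hη, hμeq]
          have hsin : ∀ i, Real.sin (ξ i) = Real.sin (η i) := by
            intro i
            rw [crit_sin_eq hα0 hξ i, crit_sin_eq hα0 hη i, hSeq]
          have hcos2 : ∀ i, Real.cos (ξ i) ^ 2 = Real.cos (η i) ^ 2 := by
            intro i
            have h1 := Real.sin_sq_add_cos_sq (ξ i)
            have h2 := Real.sin_sq_add_cos_sq (η i)
            have h4 : Real.sin (ξ i) ^ 2 = Real.sin (η i) ^ 2 := by rw [hsin i]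
            linarith
          have hcos : ∀ i, Real.cos (ξ i) = Real.cos (η i) := by
            intro i
            by_cases hb : 0 ≤ Real.cos (ξ i)
            · have hb' := (hb1 i).mp hb
              rw [← Real.sqrt_sq hb, ← Real.sqrt_sq hb', hcos2 i]
            · have hb2' := (not_congr (hb1 i)).mp hb
              have h1 : Real.sqrt (Real.cos (ξ i) ^ 2) = -Real.cos (ξ i) := by
                rw [Real.sqrt_sq_eq_abs, abs_of_neg (not_le.mp hb)]
              have h2 : Real.sqrt (Real.cos (η i) ^ 2) = -Real.cos (η i) := by
                rw [Real.sqrt_sq_eq_abs, abs_of_neg (not_le.mp hb2')]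
              have h3 : -Real.cos (ξ i) = -Real.cos (η i) := by
                rw [← h1, ← h2, hcos2 i]
              linarith
          funext i
          have hbox := hξ.1 i
          have hbox' := hη.1 i
          by_cases hs : 0 ≤ ξ i
          · have hs' := (hb2 i).mp hs
            exact Real.injOn_cos ⟨hs, hbox.2⟩ ⟨hs', hbox'.2⟩ (hcos i)
          · have hs' := (not_congr (hb2 i)).mp hs
            have h1 : -ξ i = -η i :=
              Real.injOn_cos ⟨by linarith [not_le.mp hs], by linarith [hbox.1]⟩
                ⟨by linarith [not_le.mp hs'], by linarith [hbox'.1]⟩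
                (by rw [Real.cos_neg, Real.cos_neg]; exact hcos i)
            linarith
        have hprodfin : ({x : ℝ | 0 < x ∧ ∑ k ∈ sfin, cfn k * x ^ rfn k = 0}
            ×ˢ (Set.univ : Set ((Fin d → Bool) × (Fin d → Bool)))).Finite :=
          hAfin.prod Set.finite_univ
        constructor
        · refine Set.Finite.of_finite_image (hprodfin.subset ?_) hinj
          rintro y ⟨ξ, hξ, rfl⟩
          exact hmaps ξ hξ
        · refine le_trans ?_ (le_max_right _ _)
          have hle := Set.ncard_le_ncard_of_injOn Φ hmaps hinj hprodfin
          have hprod : ({x : ℝ | 0 < x ∧ ∑ k ∈ sfin, cfn k * x ^ rfn k = 0}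
              ×ˢ (Set.univ : Set ((Fin d → Bool) × (Fin d → Bool)))).ncard
              = {x : ℝ | 0 < x ∧ ∑ k ∈ sfin, cfn k * x ^ rfn k = 0}.ncard * (2^d * 2^d) := by
            rw [← Nat.card_coe_set_eq, Nat.card_congr (Equiv.Set.prod _ _), Nat.card_prod,
              Nat.card_coe_set_eq, Nat.card_coe_set_eq, Set.ncard_univ]
            congr 1
            rw [Nat.card_eq_fintype_card]
            simp
          have hNle : {x : ℝ | 0 < x ∧ ∑ k ∈ sfin, cfn k * x ^ rfn k = 0}.ncard
              ≤ (Ed+1) * (Dd+1) := by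
            have hsc : sfin.card = (Ed+1) * (Dd+1) := by
              rw [hsfindef, Finset.card_product, Finset.card_range, Finset.card_range]
            have h := hAcard
            omega
          calc (critSet α d v).ncard ≤ _ := hle
            _ = _ := hprod
            _ ≤ ((Ed+1) * (Dd+1)) * (2^d * 2^d) := Nat.mul_le_mul_right _ hNle
  · -- Part (ii)
    refine ⟨α * (4 * d) ^ ((α - 1)/2), by positivity, fun v hv => ?_⟩
    by_contra hne
    obtain ⟨ξ, hξ⟩ := Set.nonempty_iff_ne_empty.mpr hne
    have hS := critS_pos hξ
    have hsum : (∑ i, v i ^ 2) ≤ α ^ 2 * auxS ξ ^ (α - 1) := by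
      have h1 : ∀ i, v i ^ 2 = α ^ 2 * Real.sin (ξ i) ^ 2 / auxS ξ ^ (2 - α) := by
        intro i
        have h := crit_sin_eq hα0 hξ i
        have hpow : (0:ℝ) < auxS ξ ^ ((2 - α) / 2) := Real.rpow_pos_of_pos hS _
        have h2 : (auxS ξ ^ ((2 - α) / 2)) ^ 2 = auxS ξ ^ (2 - α) := by
          rw [← Real.rpow_natCast (auxS ξ ^ ((2 - α) / 2)) 2, ← Real.rpow_mul hS.le]
          norm_num
        have h3 : Real.sin (ξ i) ^ 2 = v i ^ 2 * (auxS ξ ^ ((2-α)/2))^2 / α ^ 2 := by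
          rw [h]; field_simp
        rw [h2] at h3
        rw [h3]
        field_simp
      have h2 : ∀ i, Real.sin (ξ i) ^ 2 ≤ 2 - 2 * Real.cos (ξ i) := by
        intro i
        nlinarith [Real.sin_sq_add_cos_sq (ξ i), sq_nonneg (1 - Real.cos (ξ i))]
      have h3 : (∑ i, Real.sin (ξ i) ^ 2) ≤ auxS ξ := Finset.sum_le_sum fun i _ => h2 i
      have h4 : (∑ i, v i ^ 2) = α ^ 2 * (∑ i, Real.sin (ξ i) ^ 2) / auxS ξ ^ (2 - α) := by
        rw [Finset.mul_sum, Finset.sum_div]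
        exact Finset.sum_congr rfl fun i _ => h1 i
      rw [h4]
      have h5 : auxS ξ ^ (α - 1) = auxS ξ / auxS ξ ^ (2 - α) := by
        rw [eq_div_iff (Real.rpow_pos_of_pos hS _).ne', ← Real.rpow_add hS]
        rw [show α - 1 + (2 - α) = 1 by ring, Real.rpow_one]
      rw [h5, ← mul_div_assoc]
      have h6 : (0:ℝ) < auxS ξ ^ (2 - α) := Real.rpow_pos_of_pos hS _
      gcongr
    have hS4 : auxS ξ ≤ 4 * d := by
      have : ∀ i : Fin d, 2 - 2 * Real.cos (ξ i) ≤ 4 := by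
        intro i; nlinarith [Real.neg_one_le_cos (ξ i)]
      calc auxS ξ ≤ ∑ _i : Fin d, (4:ℝ) := Finset.sum_le_sum fun i _ => this i
        _ = 4 * d := by rw [Finset.sum_const, Finset.card_univ, Fintype.card_fin]; ring
    have hd4 : (0:ℝ) < 4 * d := by positivity
    have h7 : auxS ξ ^ (α - 1) ≤ (4 * d) ^ (α - 1) :=
      Real.rpow_le_rpow hS.le hS4 (by linarith)
    have h8 : Real.sqrt (∑ i, v i ^ 2) ≤ α * (4 * d) ^ ((α - 1)/2) := by
      have h9 : (∑ i, v i ^ 2) ≤ (α * (4 * d) ^ ((α - 1)/2)) ^ 2 := by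
        have h10 : (α * (4 * d) ^ ((α - 1)/2)) ^ 2 = α ^ 2 * (4 * d) ^ (α - 1) := by
          rw [mul_pow]
          congr 1
          rw [← Real.rpow_natCast ((4*d:ℝ) ^ ((α - 1)/2)) 2, ← Real.rpow_mul hd4.le]
          norm_num
        rw [h10]
        calc (∑ i, v i ^ 2) ≤ α ^ 2 * auxS ξ ^ (α - 1) := hsum
          _ ≤ α ^ 2 * (4 * d) ^ (α - 1) := by nlinarith [sq_nonneg α]
      calc Real.sqrt (∑ i, v i ^ 2) ≤ Real.sqrt ((α * (4 * d) ^ ((α - 1)/2)) ^ 2) :=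
            Real.sqrt_le_sqrt h9
        _ = α * (4 * d) ^ ((α - 1)/2) := Real.sqrt_sq (by positivity)
    linarith
end
end

section
/- Let α ∈ (1,2), d ≥ 1, and ω(ξ) := (Σ_{i=1}^d (2 − 2 cos ξ_i))^{α/2}. For ξ ∈ [−π,π]^d with ξ ≠ 0, the Hessian matrix Hess ω(ξ) is singular (det Hess ω(ξ) = 0) if and only if ∏_{i=1}^d cos ξ_i − ((2−α)/ω(ξ)^{2/α}) Σ_{i=1}^d ( sin² ξ_i ∏_{j≠i} cos ξ_j ) = 0, where ω(ξ)^{2/α} = Σ_{i=1}^d (2 − 2 cos ξ_i). Moreover, for ξ ∈ [0,π]^d ∖ {0} this holds if and only if either (a) cos ξ_i ≠ 0 for all i and Σ_{i=1}^d ((2−α) sec ξ_i + α cos ξ_i) = 2d, or (b) at least two coordinates of ξ are equal to π/2. -/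
noncomputable section

open MeasureTheory Real ENNReal

namespace DegAux

open Finset

variable {d : ℕ}

def Sf (y : Fin d → ℝ) : ℝ := ∑ i, (2 - 2 * Real.cos (y i))

def Sder (y : Fin d → ℝ) : (Fin d → ℝ) →L[ℝ] ℝ :=
  ∑ i, (2 * Real.sin (y i)) • ContinuousLinearMap.proj i

lemma hasFDerivAt_Sf (y : Fin d → ℝ) : HasFDerivAt (Sf (d := d)) (Sder y) y := by
  have h : ∀ i : Fin d, HasFDerivAt (fun y : Fin d → ℝ => 2 - 2 * Real.cos (y i))
      ((2 * Real.sin (y i)) • ContinuousLinearMap.proj (R := ℝ) (φ := fun _ : Fin d => ℝ) i) y := by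
    intro i
    have hp : HasFDerivAt (fun y : Fin d → ℝ => y i)
        (ContinuousLinearMap.proj (R := ℝ) (φ := fun _ : Fin d => ℝ) i) y :=
      hasFDerivAt_apply i y
    have hc := (Real.hasDerivAt_cos (y i)).comp_hasFDerivAt y hp
    have h2 := (hc.const_mul 2).const_sub 2
    refine h2.congr_fderiv ?_
    ext v
    simp
    ring
  show HasFDerivAt (fun y : Fin d → ℝ => ∑ i, (2 - 2 * Real.cos (y i)))
    (∑ i, (2 * Real.sin (y i)) • ContinuousLinearMap.proj i) y
  exact HasFDerivAt.fun_sum (fun i (_ : i ∈ Finset.univ) => h i)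

lemma sder_apply (y : Fin d → ℝ) (i : Fin d) :
    Sder y (Pi.single i 1) = 2 * Real.sin (y i) := by
  simp [Sder, ContinuousLinearMap.sum_apply, Pi.single_apply]

lemma hasFDerivAt_Sder (ξ : Fin d → ℝ) :
    HasFDerivAt (Sder (d := d))
      (∑ j, ((2 * Real.cos (ξ j)) • ContinuousLinearMap.proj (R := ℝ)
          (φ := fun _ : Fin d => ℝ) j).smulRight (ContinuousLinearMap.proj j)) ξ := by
  have h : ∀ j : Fin d, HasFDerivAt
      (fun y : Fin d → ℝ => (2 * Real.sin (y j)) •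
        ContinuousLinearMap.proj (R := ℝ) (φ := fun _ : Fin d => ℝ) j)
      (((2 * Real.cos (ξ j)) • ContinuousLinearMap.proj (R := ℝ)
          (φ := fun _ : Fin d => ℝ) j).smulRight (ContinuousLinearMap.proj j)) ξ := by
    intro j
    have hp : HasFDerivAt (fun y : Fin d → ℝ => y j)
        (ContinuousLinearMap.proj (R := ℝ) (φ := fun _ : Fin d => ℝ) j) ξ :=
      hasFDerivAt_apply j ξ
    have hs := ((Real.hasDerivAt_sin (ξ j)).comp_hasFDerivAt ξ hp).const_mul 2
    have := hs.smul_const (ContinuousLinearMap.proj (R := ℝ) (φ := fun _ : Fin d => ℝ) j)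
    refine this.congr_fderiv ?_
    ext v w
    simp [mul_assoc]
  show HasFDerivAt (fun y : Fin d → ℝ => ∑ j, (2 * Real.sin (y j)) •
      ContinuousLinearMap.proj (R := ℝ) (φ := fun _ : Fin d => ℝ) j) _ ξ
  exact HasFDerivAt.fun_sum (fun j (_ : j ∈ Finset.univ) => h j)

lemma hasFDerivAt_omega (α : ℝ) (y : Fin d → ℝ) (hS : 0 < Sf y) :
    HasFDerivAt (omegaFn α (d := d)) ((α / 2 * Sf y ^ (α / 2 - 1)) • Sder y) y := by
  have h2 : omegaFn α (d := d) = fun y => Sf y ^ (α / 2) := rfl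
  rw [h2]
  exact (hasFDerivAt_Sf y).rpow_const (Or.inl hS.ne')

lemma hess_eq (α : ℝ) (ξ : Fin d → ℝ) (hS : 0 < Sf ξ) :
    ∀ i j, hessOmega α ξ i j =
      α * Sf ξ ^ ((α - 4) / 2) *
        ((α - 2) * Real.sin (ξ i) * Real.sin (ξ j) +
          (if i = j then Sf ξ * Real.cos (ξ i) else 0)) := by
  classical
  intro i j
  -- the first-derivative map
  set c : (Fin d → ℝ) → ℝ := fun y => α / 2 * Sf y ^ (α / 2 - 1) with hc
  have hopen : IsOpen {y : Fin d → ℝ | 0 < Sf y} := by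
    have : Continuous (Sf (d := d)) := by
      unfold Sf; fun_prop
    exact isOpen_lt continuous_const this
  have hev : fderiv ℝ (omegaFn α (d := d)) =ᶠ[nhds ξ] fun y => c y • Sder y := by
    filter_upwards [hopen.mem_nhds hS] with y hy
    exact (hasFDerivAt_omega α y hy).fderiv
  -- derivative of c
  have hcder : HasFDerivAt c
      ((α / 2) • (((α / 2 - 1) * Sf ξ ^ (α / 2 - 1 - 1)) • Sder ξ)) ξ :=
    ((hasFDerivAt_Sf ξ).rpow_const (p := α / 2 - 1) (Or.inl hS.ne')).const_mul (α / 2)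
  have hB : HasFDerivAt (fun y => c y • Sder y)
      (c ξ • (∑ j, ((2 * Real.cos (ξ j)) • ContinuousLinearMap.proj (R := ℝ)
          (φ := fun _ : Fin d => ℝ) j).smulRight (ContinuousLinearMap.proj j)) +
        ((α / 2) • (((α / 2 - 1) * Sf ξ ^ (α / 2 - 1 - 1)) • Sder ξ)).smulRight (Sder ξ)) ξ :=
    hcder.smul (hasFDerivAt_Sder ξ)
  have hIter : hessOmega α ξ i j
      = fderiv ℝ (fderiv ℝ (omegaFn α (d := d))) ξ (Pi.single i 1) (Pi.single j 1) := by
    show iteratedFDeriv ℝ 2 (omegaFn α (d := d)) ξ ![Pi.single i 1, Pi.single j 1] = _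
    rw [iteratedFDeriv_two_apply]
    simp
  rw [hIter, hev.fderiv_eq, hB.fderiv]
  have hsi : ∀ (k l : Fin d), (ContinuousLinearMap.proj (R := ℝ)
      (φ := fun _ : Fin d => ℝ) k) (Pi.single l 1) = if l = k then 1 else 0 := by
    intro k l; simp [Pi.single_apply, eq_comm]
  simp only [ContinuousLinearMap.add_apply, ContinuousLinearMap.smul_apply,
    ContinuousLinearMap.sum_apply, ContinuousLinearMap.smulRight_apply, hsi, sder_apply,
    smul_eq_mul, Finset.sum_apply, Pi.smul_apply]
  have hsum : (∑ x, (2 * Real.cos (ξ x) * if i = x then 1 else 0) * if j = x then 1 else 0)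
      = if i = j then 2 * Real.cos (ξ i) else 0 := by
    rw [Finset.sum_eq_single i]
    · rcases eq_or_ne i j with h | h <;> simp [h, eq_comm]
    · intro b _ hb
      simp [Ne.symm hb]
    · simp
  rw [hsum]
  have e1 : Sf ξ ^ (α / 2 - 1) = Sf ξ * Sf ξ ^ ((α - 4) / 2) := by
    rw [show α / 2 - 1 = 1 + (α - 4) / 2 by ring, Real.rpow_add hS, Real.rpow_one]
  have e2 : Sf ξ ^ (α / 2 - 1 - 1) = Sf ξ ^ ((α - 4) / 2) := by
    rw [show α / 2 - 1 - 1 = (α - 4) / 2 by ring]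
  rcases eq_or_ne i j with h | h
  · subst h
    simp only [eq_self_iff_true, if_true, hc, e1, e2]
    ring
  · simp only [if_neg h, hc, e1, e2]
    ring

lemma hess_smul (α : ℝ) (ξ : Fin d → ℝ) (hS : 0 < Sf ξ) :
    hessOmega α ξ = (α * Sf ξ ^ ((α - 4) / 2)) •
      Matrix.of (fun i j => (if i = j then Sf ξ * Real.cos (ξ i) else 0)
        + (α - 2) * Real.sin (ξ i) * Real.sin (ξ j)) := by
  ext i j
  rw [show hessOmega α ξ i j = _ from hess_eq α ξ hS i j]
  rcases eq_or_ne i j with h | h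
  · subst h
    simp only [Matrix.smul_apply, Matrix.of_apply, smul_eq_mul, if_pos rfl]
    ring
  · simp only [Matrix.smul_apply, Matrix.of_apply, smul_eq_mul, if_neg h]
    ring

theorem det_diag_add_rank_one' {n : ℕ} (w v : Fin n → ℝ) (c : ℝ) :
    (Matrix.of fun i j => (if i = j then w i else 0) + c * v i * v j).det
      = (∏ i, w i) + c * ∑ i, v i ^ 2 * ∏ j ∈ Finset.univ.erase i, w j := by
  classical
  set f := (Matrix.detRowAlternating : AlternatingMap ℝ (Fin n → ℝ) ℝ (Fin n)) with hf
  set m : Fin n → (Fin n → ℝ) := fun i => Pi.single i (w i) with hm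
  set m' : Fin n → (Fin n → ℝ) := fun i => (c * v i) • v with hm'
  have hdiag : ∀ u : Fin n → ℝ, f (fun i => Pi.single i (u i)) = ∏ i, u i := by
    intro u
    have h2 : (Matrix.of fun i j => (fun i => Pi.single i (u i)) i j) = Matrix.diagonal u := by
      ext i j
      rcases eq_or_ne i j with h | h
      · simp [Matrix.diagonal_apply, Pi.single_apply, h]
      · simp [Matrix.diagonal_apply, Pi.single_apply, h, Ne.symm h]
    calc f (fun i => Pi.single i (u i))
        = (Matrix.of fun i j => (fun i => Pi.single i (u i)) i j).det := rfl
      _ = ∏ i, u i := by rw [h2, Matrix.det_diagonal]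
  have key : (Matrix.of fun i j => (if i = j then w i else 0) + c * v i * v j).det
      = f (m + m') := by
    congr 1
    ext i j
    rcases eq_or_ne i j with h | h
    · simp [hm, hm', Pi.single_apply, h, mul_assoc]
    · simp [hm, hm', Pi.single_apply, h, Ne.symm h, mul_assoc]
  have hexp : f (m + m') = ∑ s : Finset (Fin n), f (s.piecewise m m') :=
    f.toMultilinearMap.map_add_univ m m'
  rw [key, hexp]
  -- terms with at least two `m'` rows vanish
  have hzero : ∀ s : Finset (Fin n), ∀ i j : Fin n, i ≠ j → i ∉ s → j ∉ s →
      f (s.piecewise m m') = 0 := by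
    intro s i j hij hi hj
    have hxi : s.piecewise m m' i = (c * v i) • v := by simp [Finset.piecewise_eq_of_notMem _ _ _ hi, hm']
    have hxj : s.piecewise m m' j = (c * v j) • v := by simp [Finset.piecewise_eq_of_notMem _ _ _ hj, hm']
    set x := s.piecewise m m' with hx
    have h1 : f x = (c * v i) • f (Function.update x i v) := by
      conv_lhs => rw [← Function.update_eq_self i x]
      rw [hxi, f.map_update_smul]
    have h2 : f (Function.update x i v) = (c * v j) • f (Function.update (Function.update x i v) j v) := by
      conv_lhs => rw [← Function.update_eq_self j (Function.update x i v)]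
      rw [Function.update_apply, if_neg hij.symm, hxj, f.map_update_smul]
    have h3 : f (Function.update (Function.update x i v) j v) = 0 := by
      apply f.map_eq_zero_of_eq _ _ hij
      · rw [Function.update_apply, if_neg hij, Function.update_self, Function.update_self]
    rw [h1, h2, h3, smul_zero, smul_zero]
  -- single m' row
  have hsingle : ∀ i : Fin n, f ((univ.erase i).piecewise m m') = c * v i ^ 2 * ∏ j ∈ univ.erase i, w j := by
    intro i
    have hx : (univ.erase i).piecewise m m' = Function.update m i ((c * v i) • v) := by
      funext k
      rcases eq_or_ne k i with h | h
      · subst h; simp [Finset.piecewise_eq_of_notMem _ _ _ (notMem_erase k univ), hm']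
      · simp [Finset.piecewise_eq_of_mem _ _ _ (mem_erase.2 ⟨h, mem_univ k⟩), Function.update_apply, h]
    rw [hx, f.map_update_smul]
    have hv : v = ∑ j, v j • (Pi.single j 1 : Fin n → ℝ) := by
      funext k; simp [Pi.single_apply]
    have hsum : f (Function.update m i v) = ∑ j, v j * f (Function.update m i (Pi.single j 1)) := by
      conv_lhs => rw [hv]
      rw [f.map_update_sum]
      congr 1; funext j
      rw [f.map_update_smul]; simp
    have hterm : ∀ j : Fin n, j ≠ i → f (Function.update m i (Pi.single j 1)) = 0 := by
      intro j hj
      set y := Function.update m i (Pi.single j (1:ℝ)) with hy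
      have hyj : y j = w j • (Pi.single j 1 : Fin n → ℝ) := by
        have : y j = Pi.single j (w j) := by simp [hy, Function.update_apply, hj, hm]
        rw [this]
        funext k
        by_cases h : k = j <;> simp [Pi.single_apply, h]
      have : f y = w j • f (Function.update y j (Pi.single j 1)) := by
        conv_lhs => rw [← Function.update_eq_self j y]
        rw [hyj, f.map_update_smul]
      rw [this]
      have : f (Function.update y j (Pi.single j 1)) = 0 := by
        apply f.map_eq_zero_of_eq _ _ (Ne.symm hj)
        · rw [Function.update_self, Function.update_apply, if_neg (fun h => hj h.symm), hy, Function.update_self]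
      rw [this, smul_zero]
    have hii : f (Function.update m i (Pi.single i 1)) = ∏ j ∈ univ.erase i, w j := by
      have : Function.update m i (Pi.single i (1:ℝ)) = fun k => Pi.single k (Function.update w i 1 k) := by
        funext k
        rcases eq_or_ne k i with h | h
        · subst h; simp
        · simp [Function.update_apply, h, hm]
      rw [this, hdiag]
      rw [Finset.prod_update_of_mem (mem_univ i), one_mul, Finset.sdiff_singleton_eq_erase]
    rw [hsum, Finset.sum_eq_single i (fun j _ hj => by rw [hterm j hj, mul_zero]) (by simp), hii]
    simp; ring
  -- assemble
  have hsub : insert (univ : Finset (Fin n)) (univ.image fun i => univ.erase i)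
      ⊆ (univ : Finset (Finset (Fin n))) := Finset.subset_univ _
  have hvan : ∀ s ∈ (univ : Finset (Finset (Fin n))),
      s ∉ insert (univ : Finset (Fin n)) (univ.image fun i => univ.erase i) →
      f (s.piecewise m m') = 0 := by
    intro s _ hmem
    have h1 : s ≠ univ := by rintro rfl; exact hmem (Finset.mem_insert_self _ _)
    have h2 : ∀ i, s ≠ univ.erase i := by
      intro i h
      exact hmem (Finset.mem_insert.2 (Or.inr (Finset.mem_image.2 ⟨i, mem_univ i, h.symm⟩)))
    obtain ⟨i, hi⟩ : ∃ i, i ∉ s := by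
      by_contra h; push_neg at h
      exact h1 (Finset.eq_univ_iff_forall.2 h)
    obtain ⟨j, hj, hji⟩ : ∃ j, j ∉ s ∧ j ≠ i := by
      by_contra h; push_neg at h
      apply h2 i
      apply Finset.ext
      intro k
      simp only [Finset.mem_erase, Finset.mem_univ, and_true]
      constructor
      · intro hk
        rintro rfl; exact hi hk
      · intro hk
        by_contra hks
        exact hk (h k hks)
    exact hzero s j i hji hj hi
  rw [← Finset.sum_subset hsub hvan, Finset.sum_insert, Finset.sum_image]
  · have hu : (univ : Finset (Fin n)).piecewise m m' = m := by
      funext k; simp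
    rw [hu]
    have hfm : f m = ∏ i, w i := hdiag w
    rw [hfm, Finset.mul_sum]
    congr 1
    refine Finset.sum_congr rfl fun i _ => ?_
    rw [hsingle i]; ring
  · intro i _ j _ hij
    by_contra hne
    have hji : j ∈ univ.erase i := Finset.mem_erase.2 ⟨fun h => hne h.symm, mem_univ j⟩
    rw [show univ.erase i = univ.erase j from hij] at hji
    exact (Finset.notMem_erase j univ) hji
  · intro hmem
    obtain ⟨i, -, hi⟩ := Finset.mem_image.1 hmem
    have : i ∈ univ.erase i := by rw [hi]; exact mem_univ i
    exact Finset.notMem_erase i univ this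

lemma det_hess_eq (α : ℝ) (ξ : Fin d → ℝ) (hd : 1 ≤ d) (hS : 0 < Sf ξ) :
    (hessOmega α ξ).det = (α * Sf ξ ^ ((α - 4) / 2)) ^ d * Sf ξ ^ d *
      ((∏ i, Real.cos (ξ i)) - ((2 - α) / Sf ξ) *
        ∑ i, (Real.sin (ξ i) ^ 2 * ∏ j ∈ Finset.univ.erase i, Real.cos (ξ j))) := by
  rw [hess_smul α ξ hS, Matrix.det_smul]
  have h1 : (Matrix.of fun i j => (if i = j then Sf ξ * Real.cos (ξ i) else 0)
      + (α - 2) * Real.sin (ξ i) * Real.sin (ξ j)).det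
      = (∏ i, Sf ξ * Real.cos (ξ i))
        + (α - 2) * ∑ i, Real.sin (ξ i) ^ 2 * ∏ j ∈ Finset.univ.erase i, (Sf ξ * Real.cos (ξ j)) := by
    exact det_diag_add_rank_one' (fun i => Sf ξ * Real.cos (ξ i)) (fun i => Real.sin (ξ i)) (α - 2)
  rw [h1]
  simp only [Fintype.card_fin]
  have h2 : (∏ i : Fin d, Sf ξ * Real.cos (ξ i)) = Sf ξ ^ d * ∏ i, Real.cos (ξ i) := by
    rw [Finset.prod_mul_distrib, Finset.prod_const, Finset.card_univ, Fintype.card_fin]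
  have h3 : ∀ i : Fin d, (∏ j ∈ Finset.univ.erase i, (Sf ξ * Real.cos (ξ j)))
      = Sf ξ ^ (d - 1) * ∏ j ∈ Finset.univ.erase i, Real.cos (ξ j) := by
    intro i
    rw [Finset.prod_mul_distrib, Finset.prod_const, Finset.card_erase_of_mem (Finset.mem_univ i),
      Finset.card_univ, Fintype.card_fin]
  obtain ⟨e, rfl⟩ : ∃ e, d = e + 1 := ⟨d - 1, (Nat.succ_pred_eq_of_pos hd).symm⟩
  simp only [Nat.add_sub_cancel] at h3
  rw [h2]
  have h4 : ∑ i, Real.sin (ξ i) ^ 2 * ∏ j ∈ Finset.univ.erase i, (Sf ξ * Real.cos (ξ j))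
      = Sf ξ ^ e * ∑ i, Real.sin (ξ i) ^ 2 * ∏ j ∈ Finset.univ.erase i, Real.cos (ξ j) := by
    rw [Finset.mul_sum]
    exact Finset.sum_congr rfl fun i _ => by rw [h3 i]; ring
  rw [h4]
  have h5 : Sf ξ ^ (e + 1) = Sf ξ ^ e * Sf ξ := pow_succ _ _
  field_simp
  ring

lemma Sf_pos (ξ : Fin d → ℝ) (hξ : ∀ i, ξ i ∈ Set.Icc (-π) π) (hξ0 : ξ ≠ 0) : 0 < Sf ξ := by
  obtain ⟨i, hi'⟩ := Function.ne_iff.1 hξ0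
  have hi : ξ i ≠ 0 := hi'
  have hpi := Real.pi_pos
  refine Finset.sum_pos' (fun j _ => by nlinarith [Real.cos_le_one (ξ j)]) ⟨i, Finset.mem_univ i, ?_⟩
  have h1 : -(2 * π) < ξ i := by have := (hξ i).1; linarith
  have h2 : ξ i < 2 * π := by have := (hξ i).2; linarith
  have hlt : Real.cos (ξ i) < 1 := by
    refine lt_of_le_of_ne (Real.cos_le_one _) fun h => ?_
    exact hi ((Real.cos_eq_one_iff_of_lt_of_lt h1 h2).1 h)
  linarith

lemma part1 (α : ℝ) (hα : 1 < α ∧ α < 2) {d : ℕ} (hd : 1 ≤ d) (ξ : Fin d → ℝ)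
    (hS : 0 < Sf ξ) :
    ((hessOmega α ξ).det = 0 ↔
      (∏ i, Real.cos (ξ i)) -
          ((2 - α) / ∑ i, (2 - 2 * Real.cos (ξ i))) *
            ∑ i, (Real.sin (ξ i) ^ 2 * ∏ j ∈ Finset.univ.erase i, Real.cos (ξ j)) = 0) := by
  have hα0 : (0:ℝ) < α := by linarith [hα.1]
  have hC : (α * Sf ξ ^ ((α - 4) / 2)) ^ d * Sf ξ ^ d ≠ 0 :=
    ne_of_gt (mul_pos (pow_pos (mul_pos hα0 (Real.rpow_pos_of_pos hS _)) d) (pow_pos hS d))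
  rw [det_hess_eq α ξ hd hS, mul_eq_zero, or_iff_right hC]
  exact Iff.rfl

lemma part2 (α : ℝ) (hα : 1 < α ∧ α < 2) {d : ℕ} (ξ : Fin d → ℝ)
    (hS : 0 < Sf ξ) (hpos : ∀ i, ξ i ∈ Set.Icc 0 π) :
    ((∏ i, Real.cos (ξ i)) -
          ((2 - α) / ∑ i, (2 - 2 * Real.cos (ξ i))) *
            ∑ i, (Real.sin (ξ i) ^ 2 * ∏ j ∈ Finset.univ.erase i, Real.cos (ξ j)) = 0) ↔
      ((∀ i, Real.cos (ξ i) ≠ 0) ∧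
          ∑ i, ((2 - α) / Real.cos (ξ i) + α * Real.cos (ξ i)) = 2 * d) ∨
        ∃ i j, i ≠ j ∧ ξ i = π / 2 ∧ ξ j = π / 2 := by
  have hS' : (∑ i, (2 - 2 * Real.cos (ξ i))) = Sf ξ := rfl
  have hSne : Sf ξ ≠ 0 := ne_of_gt hS
  have h2α : (0:ℝ) < 2 - α := by linarith [hα.2]
  by_cases hall : ∀ i, Real.cos (ξ i) ≠ 0
  · -- no vanishing cosine
    have hP : (∏ i, Real.cos (ξ i)) ≠ 0 := Finset.prod_ne_zero_iff.2 fun i _ => hall i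
    have hQ : ∀ i, Real.sin (ξ i) ^ 2 * ∏ j ∈ Finset.univ.erase i, Real.cos (ξ j)
        = (1 / Real.cos (ξ i) - Real.cos (ξ i)) * ∏ j, Real.cos (ξ j) := by
      intro i
      have hprod : (∏ j, Real.cos (ξ j))
          = Real.cos (ξ i) * ∏ j ∈ Finset.univ.erase i, Real.cos (ξ j) :=
        (Finset.mul_prod_erase Finset.univ _ (Finset.mem_univ i)).symm
      rw [Real.sin_sq, hprod]
      field_simp [hall i]
    have hQsum : (∑ i, Real.sin (ξ i) ^ 2 * ∏ j ∈ Finset.univ.erase i, Real.cos (ξ j))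
        = (∑ i, (1 / Real.cos (ξ i) - Real.cos (ξ i))) * ∏ j, Real.cos (ξ j) := by
      rw [Finset.sum_mul]
      exact Finset.sum_congr rfl fun i _ => hQ i
    have hsplit : Sf ξ - (2 - α) * ∑ i, (1 / Real.cos (ξ i) - Real.cos (ξ i))
        = 2 * d - ∑ i, ((2 - α) / Real.cos (ξ i) + α * Real.cos (ξ i)) := by
      have hterm : ∀ i, (2 - 2 * Real.cos (ξ i)) - (2 - α) * (1 / Real.cos (ξ i) - Real.cos (ξ i))
          = 2 - ((2 - α) / Real.cos (ξ i) + α * Real.cos (ξ i)) := by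
        intro i
        field_simp [hall i]
        ring
      have e1 : ∑ i, ((2 - 2 * Real.cos (ξ i)) - (2 - α) * (1 / Real.cos (ξ i) - Real.cos (ξ i)))
          = Sf ξ - (2 - α) * ∑ i, (1 / Real.cos (ξ i) - Real.cos (ξ i)) := by
        rw [Finset.sum_sub_distrib, ← Finset.mul_sum]; rfl
      have e2 : ∑ i, (2 - ((2 - α) / Real.cos (ξ i) + α * Real.cos (ξ i)))
          = 2 * d - ∑ i, ((2 - α) / Real.cos (ξ i) + α * Real.cos (ξ i)) := by
        rw [Finset.sum_sub_distrib, Finset.sum_const, Finset.card_univ, Fintype.card_fin,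
          nsmul_eq_mul]
        ring
      rw [← e1, ← e2]
      exact Finset.sum_congr rfl fun i _ => hterm i
    have hb : ¬ ∃ i j, i ≠ j ∧ ξ i = π / 2 ∧ ξ j = π / 2 := by
      rintro ⟨i, j, -, h1, -⟩
      exact hall i (by rw [h1]; exact Real.cos_pi_div_two)
    rw [or_iff_left hb, and_iff_right hall, hS', hQsum]
    have key : (∏ i, Real.cos (ξ i)) - (2 - α) / Sf ξ *
          ((∑ i, (1 / Real.cos (ξ i) - Real.cos (ξ i))) * ∏ j, Real.cos (ξ j))
        = (∏ i, Real.cos (ξ i)) / Sf ξ *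
          (Sf ξ - (2 - α) * ∑ i, (1 / Real.cos (ξ i) - Real.cos (ξ i))) := by
      field_simp
    rw [key, hsplit, mul_eq_zero, or_iff_right (div_ne_zero hP hSne), sub_eq_zero, eq_comm]
  · -- some cosine vanishes
    push_neg at hall
    obtain ⟨k, hk⟩ := hall
    have hhalf : ξ k = π / 2 := by
      have hpi := Real.pi_pos
      refine Real.injOn_cos ⟨(hpos k).1, (hpos k).2⟩ ⟨by linarith, by linarith⟩ ?_
      rw [hk, Real.cos_pi_div_two]
    by_cases h2 : ∃ l, l ≠ k ∧ Real.cos (ξ l) = 0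
    · obtain ⟨l, hlk, hl⟩ := h2
      have hlhalf : ξ l = π / 2 := by
        have hpi := Real.pi_pos
        refine Real.injOn_cos ⟨(hpos l).1, (hpos l).2⟩ ⟨by linarith, by linarith⟩ ?_
        rw [hl, Real.cos_pi_div_two]
      have hP : (∏ i, Real.cos (ξ i)) = 0 := Finset.prod_eq_zero (Finset.mem_univ k) hk
      have hQ : (∑ i, Real.sin (ξ i) ^ 2 * ∏ j ∈ Finset.univ.erase i, Real.cos (ξ j)) = 0 := by
        refine Finset.sum_eq_zero fun i _ => ?_
        rcases eq_or_ne i k with h | h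
        · subst h
          rw [Finset.prod_eq_zero (Finset.mem_erase.2 ⟨hlk, Finset.mem_univ l⟩) hl, mul_zero]
        · rw [Finset.prod_eq_zero (Finset.mem_erase.2 ⟨Ne.symm h, Finset.mem_univ k⟩) hk, mul_zero]
      rw [hP, hQ]
      simp only [mul_zero, sub_zero]
      constructor
      · intro _; exact Or.inr ⟨l, k, hlk, hlhalf, hhalf⟩
      · intro _; trivial
    · push_neg at h2
      have hQ : (∑ i, Real.sin (ξ i) ^ 2 * ∏ j ∈ Finset.univ.erase i, Real.cos (ξ j))
          = ∏ j ∈ Finset.univ.erase k, Real.cos (ξ j) := by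
        rw [Finset.sum_eq_single k]
        · have : Real.sin (ξ k) ^ 2 = 1 := by
            rw [Real.sin_sq, hk]; norm_num
          rw [this, one_mul]
        · intro i _ hik
          rw [Finset.prod_eq_zero (Finset.mem_erase.2 ⟨Ne.symm hik, Finset.mem_univ k⟩) hk,
            mul_zero]
        · intro h; exact absurd (Finset.mem_univ k) h
      have hP : (∏ i, Real.cos (ξ i)) = 0 := Finset.prod_eq_zero (Finset.mem_univ k) hk
      have hProdne : (∏ j ∈ Finset.univ.erase k, Real.cos (ξ j)) ≠ 0 :=
        Finset.prod_ne_zero_iff.2 fun j hj => h2 j (Finset.mem_erase.1 hj).1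
      have hEne : (∏ i, Real.cos (ξ i)) -
          ((2 - α) / ∑ i, (2 - 2 * Real.cos (ξ i))) *
            ∑ i, (Real.sin (ξ i) ^ 2 * ∏ j ∈ Finset.univ.erase i, Real.cos (ξ j)) ≠ 0 := by
        rw [hP, hQ, hS', zero_sub, neg_ne_zero]
        exact mul_ne_zero (div_ne_zero (ne_of_gt h2α) hSne) hProdne
      constructor
      · intro h; exact absurd h hEne
      · rintro (⟨h, -⟩ | ⟨i, j, hij, h1, h1'⟩)
        · exact absurd hk (h k)
        · exfalso
          have hi : Real.cos (ξ i) = 0 := by rw [h1]; exact Real.cos_pi_div_two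
          have hj : Real.cos (ξ j) = 0 := by rw [h1']; exact Real.cos_pi_div_two
          rcases eq_or_ne i k with hik | hik
          · rcases eq_or_ne j k with hjk | hjk
            · exact hij (hik.trans hjk.symm)
            · exact h2 j hjk hj
          · exact h2 i hik hi

end DegAux

/-- Theorem 3.4: characterization of degenerate points. -/
theorem degenerate_points_characterization
    (α : ℝ) (hα : 1 < α ∧ α < 2) (d : ℕ) (hd : 1 ≤ d)
    (ξ : Fin d → ℝ) (hξ : ∀ i, ξ i ∈ Set.Icc (-π) π) (hξ0 : ξ ≠ 0) :
    ((hessOmega α ξ).det = 0 ↔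
      (∏ i, Real.cos (ξ i)) -
          ((2 - α) / ∑ i, (2 - 2 * Real.cos (ξ i))) *
            ∑ i, (Real.sin (ξ i) ^ 2 * ∏ j ∈ Finset.univ.erase i, Real.cos (ξ j)) = 0) ∧
    ((∀ i, ξ i ∈ Set.Icc 0 π) →
      ((hessOmega α ξ).det = 0 ↔
        ((∀ i, Real.cos (ξ i) ≠ 0) ∧
            ∑ i, ((2 - α) / Real.cos (ξ i) + α * Real.cos (ξ i)) = 2 * d) ∨
          ∃ i j, i ≠ j ∧ ξ i = π / 2 ∧ ξ j = π / 2)) := by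
  have hS : 0 < DegAux.Sf ξ := DegAux.Sf_pos ξ hξ hξ0
  exact ⟨DegAux.part1 α hα hd ξ hS,
    fun hpos => (DegAux.part1 α hα hd ξ hS).trans (DegAux.part2 α hα ξ hS hpos)⟩
end
end

section
/- Let α ∈ (1,2) and d ≥ 1, and define Γ₁ := { ξ ∈ [−π,π]^d, ξ ≠ 0 : cos ξ_i ≠ 0 for all i = 1,…,d, and Σ_{i=1}^d ((2−α)/cos ξ_i + α cos ξ_i) = 2d }. Then there exists r_α > 0 such that |ξ| ≥ r_α for every ξ ∈ Γ₁; that is, the degenerate points of the first kind stay uniformly away from the origin. -/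
noncomputable section

open MeasureTheory Real ENNReal

/-- equation (3.9): first-kind degenerate points stay uniformly
away from the origin. -/
theorem first_kind_degenerate_away_from_origin
    (α : ℝ) (hα : 1 < α ∧ α < 2) (d : ℕ) (hd : 1 ≤ d) :
    ∃ r > (0:ℝ), ∀ ξ : Fin d → ℝ,
      (∀ i, ξ i ∈ Set.Icc (-π) π) → ξ ≠ 0 →
      (∀ i, Real.cos (ξ i) ≠ 0) →
      (∑ i, ((2 - α) / Real.cos (ξ i) + α * Real.cos (ξ i)) = 2 * d) →
      r ≤ Real.sqrt (∑ i, ξ i ^ 2) := by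
  obtain ⟨hα1, hα2⟩ := hα
  set β : ℝ := (2 - α) / α with hβ
  have hα0 : (0:ℝ) < α := by linarith
  have hβ0 : 0 < β := div_pos (by linarith) hα0
  have hβ1 : β < 1 := by rw [div_lt_one hα0]; linarith
  set r : ℝ := Real.arccos β with hr
  have hr0 : 0 < r := Real.arccos_pos.2 hβ1
  have hrπ : r ≤ π := Real.arccos_le_pi β
  have hcosr : Real.cos r = β := Real.cos_arccos (by linarith) (by linarith)
  refine ⟨r, hr0, fun ξ hbox hne hcos hsum => ?_⟩
  by_contra hlt
  push_neg at hlt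
  have hs : ∑ i, ξ i ^ 2 < r ^ 2 := by
    have h0 : 0 ≤ ∑ i, ξ i ^ 2 := Finset.sum_nonneg fun i _ => sq_nonneg _
    have := Real.sq_sqrt h0
    nlinarith [Real.sqrt_nonneg (∑ i, ξ i ^ 2)]
  have habs : ∀ i, |ξ i| < r := by
    intro i
    have h1 : ξ i ^ 2 ≤ ∑ j, ξ j ^ 2 :=
      Finset.single_le_sum (fun j _ => sq_nonneg (ξ j)) (Finset.mem_univ i)
    have : ξ i ^ 2 < r ^ 2 := lt_of_le_of_lt h1 hs
    nlinarith [abs_nonneg (ξ i), sq_abs (ξ i)]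
  have hcgt : ∀ i, β < Real.cos (ξ i) := by
    intro i
    have h1 : Real.cos r < Real.cos |ξ i| :=
      Real.cos_lt_cos_of_nonneg_of_le_pi (abs_nonneg _) hrπ (habs i)
    rwa [hcosr, Real.cos_abs] at h1
  have hle : ∀ i, (2 - α) / Real.cos (ξ i) + α * Real.cos (ξ i) ≤ 2 := by
    intro i
    have hc0 : 0 < Real.cos (ξ i) := lt_trans hβ0 (hcgt i)
    have hc1 : Real.cos (ξ i) ≤ 1 := Real.cos_le_one _
    rw [div_add' _ _ _ (ne_of_gt hc0), div_le_iff₀ hc0]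
    have hβc : β < Real.cos (ξ i) := hcgt i
    have : 2 - α < α * Real.cos (ξ i) := by
      have := (div_lt_iff₀ hα0).1 (by rwa [hβ] at hβc : (2 - α) / α < Real.cos (ξ i))
      linarith [this]
    nlinarith
  obtain ⟨j, hj⟩ : ∃ j, ξ j ≠ 0 := by
    by_contra h; push_neg at h; exact hne (funext h)
  have hjlt : (2 - α) / Real.cos (ξ j) + α * Real.cos (ξ j) < 2 := by
    have hc0 : 0 < Real.cos (ξ j) := lt_trans hβ0 (hcgt j)
    have hcj : Real.cos (ξ j) < 1 := by
      have h1 : Real.cos |ξ j| < Real.cos 0 :=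
        Real.cos_lt_cos_of_nonneg_of_le_pi le_rfl (le_trans (le_of_lt (habs j)) hrπ)
          (abs_pos.2 hj)
      rwa [Real.cos_zero, Real.cos_abs] at h1
    rw [div_add' _ _ _ (ne_of_gt hc0), div_lt_iff₀ hc0]
    have hβc : β < Real.cos (ξ j) := hcgt j
    have : 2 - α < α * Real.cos (ξ j) := by
      have := (div_lt_iff₀ hα0).1 (by rwa [hβ] at hβc : (2 - α) / α < Real.cos (ξ j))
      linarith [this]
    nlinarith
  have hstrict : ∑ i, ((2 - α) / Real.cos (ξ i) + α * Real.cos (ξ i)) < ∑ _i : Fin d, (2:ℝ) :=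
    Finset.sum_lt_sum (fun i _ => hle i) ⟨j, Finset.mem_univ j, hjlt⟩
  rw [Finset.sum_const, Finset.card_univ, Fintype.card_fin, nsmul_eq_mul] at hstrict
  rw [hsum] at hstrict
  linarith
end
end
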